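/- arXiv:1603.00430 — 4 statements merged into one kernel-verified Lean document; each statement's English description precedes it below -/
import Mathlib

section
/- Let a, q : ℝ → ℝ be continuous and bounded with inf_{x∈ℝ} a(x) > 0, let R ∈ ℝ and ε > 0. Then there exists no function z that is C² on (R,∞) and C¹ on [R,∞), with z > 0 on [R,∞), (1/x)·ln z(x) → 0 as x → +∞, and satisfying the differential inequality −a(x) z''(x) − q(x) z'(x) ≥ ε z(x) for all x ∈ (R,∞). -/
/-!
Set `φ = z'/z`. Where `|φ| ≤ c` with `c` small, the inequality gives `z''/z ≤ -ε/(2a)`, so the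
Riccati equation `φ' = z''/z - φ²` makes `φ` decrease at a uniform rate inside the strip
`|φ| ≤ c`. Hence `φ` cannot re-enter the strip once it has left it downwards, and cannot stay
in it forever: eventually `φ ≥ c` or `φ ≤ -c`. Since `φ = (log z)'`, this makes `log z` grow
or decay at least linearly, contradicting `log z(x) / x → 0`.
-/

open Real Filter Set Topology

lemma mul_sub_le_sub_of_hasDerivAt {f f' : ℝ → ℝ} {x₀ C : ℝ}
    (hf : ∀ x ≥ x₀, HasDerivAt f (f' x) x) (hC : ∀ x ≥ x₀, C ≤ f' x) {x : ℝ} (hx : x₀ ≤ x) :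
    C * (x - x₀) ≤ f x - f x₀ := by
  refine (convex_Ici x₀).mul_sub_le_image_sub_of_le_deriv
    (fun y hy => (hf y hy).continuousAt.continuousWithinAt) ?_ ?_ x₀ self_mem_Ici x hx hx
  · rw [interior_Ici]
    exact fun y hy => (hf y (le_of_lt hy)).differentiableAt.differentiableWithinAt
  · rw [interior_Ici]
    exact fun y hy => (hf y (le_of_lt hy)).deriv ▸ hC y (le_of_lt hy)

lemma le_of_hasDerivAt_neg_of_eq {f f' : ℝ → ℝ} {x₀ b : ℝ}
    (hf : ∀ x ≥ x₀, HasDerivAt f (f' x) x) (h₀ : f x₀ ≤ b) (hb : ∀ x ≥ x₀, f x = b → f' x < 0)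
    {x : ℝ} (hx : x₀ ≤ x) : f x ≤ b :=
  image_le_of_deriv_right_lt_deriv_boundary (B := fun _ => b) (B' := 0)
    (fun y hy => (hf y hy.1).continuousAt.continuousWithinAt)
    (fun y hy => (hf y hy.1).hasDerivWithinAt) h₀ (fun _ => hasDerivAt_const _ _)
    (fun y hy hy' => hb y hy.1 hy') ⟨hx, le_rfl⟩

lemma eventually_ge_or_le_neg_of_deriv_le_neg_on_strip {φ φ' : ℝ → ℝ} {R c κ : ℝ}
    (hφ : ∀ x > R, HasDerivAt φ (φ' x) x) (hc : 0 ≤ c) (hκ : 0 < κ)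
    (hstrip : ∀ x > R, |φ x| ≤ c → φ' x ≤ -κ) :
    (∀ᶠ x in atTop, c ≤ φ x) ∨ ∀ᶠ x in atTop, φ x ≤ -c := by
  by_cases hge : ∀ x > R, c ≤ φ x
  · exact .inl ((eventually_gt_atTop R).mono hge)
  obtain ⟨x₀, hx₀, hφx₀⟩ : ∃ x₀ > R, φ x₀ < c := by simpa using hge
  have hφ₀ : ∀ x ≥ x₀, HasDerivAt φ (φ' x) x := fun x hx => hφ x (hx₀.trans_le hx)
  have hdecr : ∀ x ≥ x₀, |φ x| ≤ c → φ' x < 0 := fun x hx hx' =>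
    (hstrip x (hx₀.trans_le hx) hx').trans_lt (neg_neg_of_pos hκ)
  have hle : ∀ x ≥ x₀, φ x ≤ c := fun x hx =>
    le_of_hasDerivAt_neg_of_eq hφ₀ hφx₀.le
      (fun y hy hy' => hdecr y hy (by rw [hy', abs_of_nonneg hc])) hx
  obtain ⟨x₁, hx₁, hφx₁⟩ : ∃ x₁ ≥ x₀, φ x₁ ≤ -c := by
    by_contra! hin
    have hx : x₀ ≤ x₀ + 2 * c / κ := le_add_of_nonneg_right (by positivity)
    have hfall := mul_sub_le_sub_of_hasDerivAt (f := fun y => -φ y) (C := κ)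
      (fun y hy => (hφ₀ y hy).neg)
      (fun y hy => le_neg.mpr (hstrip y (hx₀.trans_le hy) (abs_le.mpr ⟨(hin y hy).le, hle y hy⟩)))
      hx
    have hκc : κ * (x₀ + 2 * c / κ - x₀) = 2 * c := by field_simp; ring
    linarith [hin _ hx]
  refine .inr (eventually_atTop.mpr ⟨x₁, fun x hx => ?_⟩)
  refine le_of_hasDerivAt_neg_of_eq (fun y hy => hφ₀ y (hx₁.trans hy)) hφx₁ (fun y hy hy' => ?_) hx
  exact hdecr y (hx₁.trans hy) (by rw [hy', abs_neg, abs_of_nonneg hc])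

lemma not_tendsto_div_self_zero_of_const_le_deriv {f f' : ℝ → ℝ} {c : ℝ}
    (hf : ∀ᶠ x in atTop, HasDerivAt f (f' x) x) (hc : 0 < c) (hf' : ∀ᶠ x in atTop, c ≤ f' x) :
    ¬ Tendsto (fun x => f x / x) atTop (𝓝 0) := by
  intro hlim
  obtain ⟨x₀, hx₀⟩ := eventually_atTop.mp (hf.and hf')
  have hbound : ∀ᶠ x in atTop, c + (f x₀ - c * x₀) / x ≤ f x / x := by
    filter_upwards [eventually_ge_atTop x₀, eventually_gt_atTop 0] with x hx hxpos
    have := mul_sub_le_sub_of_hasDerivAt (fun y hy => (hx₀ y hy).1) (fun y hy => (hx₀ y hy).2) hx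
    calc c + (f x₀ - c * x₀) / x = (c * (x - x₀) + f x₀) / x := by field_simp; ring
      _ ≤ f x / x := by gcongr; linarith
  have hlow : Tendsto (fun x => c + (f x₀ - c * x₀) / x) atTop (𝓝 (c + 0)) :=
    tendsto_const_nhds.add (tendsto_const_nhds.div_atTop tendsto_id)
  exact hc.not_ge (by simpa using le_of_tendsto_of_tendsto hlow hlim hbound)

lemma riccati_le_of_abs_logDeriv_le {a q Ma Mq ε c u u' u'' : ℝ} (hu : 0 < u) (ha : 0 < a)
    (haM : a ≤ Ma) (hq : |q| ≤ Mq) (hε : 0 ≤ ε) (hc : Mq * c ≤ ε / 2) (hφ : |u' / u| ≤ c)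
    (h : ε * u ≤ -(a * u'') - q * u') :
    (u'' * u - u' * u') / u ^ 2 ≤ -(ε / (2 * Ma)) := by
  have hu' : |u'| ≤ c * u := by rwa [abs_div, abs_of_pos hu, div_le_iff₀ hu] at hφ
  have hqu' : -(q * u') ≤ Mq * (c * u) :=
    calc -(q * u') ≤ |q| * |u'| := abs_mul q u' ▸ neg_le_abs _
      _ ≤ Mq * (c * u) := mul_le_mul hq hu' (abs_nonneg _) ((abs_nonneg _).trans hq)
  have hau'' : a * u'' ≤ -(ε / 2) * u := by linarith [mul_le_mul_of_nonneg_right hc hu.le]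
  have hu''0 : u'' ≤ 0 := nonpos_of_mul_nonpos_right (hau''.trans (by nlinarith)) ha
  have hMau'' : Ma * u'' ≤ -(ε / 2) * u := (mul_le_mul_of_nonpos_right haM hu''0).trans hau''
  have hu'' : u'' / u ≤ -(ε / (2 * Ma)) := by
    rw [div_le_iff₀ hu, neg_mul, div_mul_eq_mul_div, le_neg, div_le_iff₀ (by linarith)]
    linarith
  calc (u'' * u - u' * u') / u ^ 2 = u'' / u - (u' / u) ^ 2 := by field_simp
    _ ≤ u'' / u := sub_le_self _ (sq_nonneg _)
    _ ≤ -(ε / (2 * Ma)) := hu''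

theorem no_positive_strict_supersolution_general
    (a q : ℝ → ℝ)
    (ha_bdd : ∃ M, ∀ x, |a x| ≤ M) (hq_bdd : ∃ M, ∀ x, |q x| ≤ M)
    (ha_pos : ∃ m > 0, ∀ x, m ≤ a x)
    (R ε : ℝ) (hε : 0 < ε) :
    ¬ ∃ z : ℝ → ℝ,
        ContDiffOn ℝ 2 z (Set.Ioi R) ∧
        ContDiffOn ℝ 1 z (Set.Ici R) ∧
        (∀ x ∈ Set.Ici R, 0 < z x) ∧
        Filter.Tendsto (fun x => Real.log (z x) / x) Filter.atTop (nhds 0) ∧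
        (∀ x ∈ Set.Ioi R, ε * z x ≤ -(a x * deriv (deriv z) x) - q x * deriv z x) := by
  rintro ⟨z, hz, -, hzpos, hlim, hsuper⟩
  obtain ⟨Ma, hMa⟩ := ha_bdd
  obtain ⟨Mq, hMq⟩ := hq_bdd
  obtain ⟨m, hm, ham⟩ := ha_pos
  have ha : ∀ x, 0 < a x := fun x => hm.trans_le (ham x)
  have hMa0 : 0 < Ma := (ha 0).trans_le ((le_abs_self _).trans (hMa 0))
  have hMq0 : 0 ≤ Mq := (abs_nonneg _).trans (hMq 0)
  obtain ⟨c, hc0, hc⟩ : ∃ c > 0, Mq * c ≤ ε / 2 := ⟨ε / (2 * (Mq + 1)), by positivity, by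
    rw [mul_div_assoc', div_le_div_iff₀ (by positivity) two_pos]; nlinarith⟩
  have hz' : ∀ x > R, HasDerivAt z (deriv z x) x := fun x hx =>
    ((hz.differentiableOn (by norm_num)).differentiableAt (Ioi_mem_nhds hx)).hasDerivAt
  have hz'' : ∀ x > R, HasDerivAt (deriv z) (deriv (deriv z) x) x := fun x hx =>
    (((hz.deriv_of_isOpen (m := 1) isOpen_Ioi (by norm_num)).differentiableOn
      (by norm_num)).differentiableAt (Ioi_mem_nhds hx)).hasDerivAt
  have hlog : ∀ᶠ x in atTop, HasDerivAt (fun y => log (z y)) (deriv z x / z x) x :=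
    (eventually_gt_atTop R).mono fun x hx => (hz' x hx).log (hzpos x (le_of_lt hx)).ne'
  rcases eventually_ge_or_le_neg_of_deriv_le_neg_on_strip
      (fun x hx => (hz'' x hx).div (hz' x hx) (hzpos x (le_of_lt hx)).ne')
      hc0.le (by positivity : 0 < ε / (2 * Ma))
      (fun x hx hφ => riccati_le_of_abs_logDeriv_le (hzpos x (le_of_lt hx)) (ha x)
        ((le_abs_self _).trans (hMa x)) (hMq x) hε.le hc hφ (hsuper x hx)) with hgrow | hdecay
  · exact not_tendsto_div_self_zero_of_const_le_deriv hlog hc0 hgrow hlim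
  · refine not_tendsto_div_self_zero_of_const_le_deriv (f := fun y => -log (z y))
      (hlog.mono fun x h => h.neg) hc0 (hdecay.mono fun x h => le_neg.mpr h) ?_
    simpa [neg_div] using hlim.neg

/-- Lemma 3.2 in Berestycki–Nadin. If `a, q : ℝ → ℝ` are continuous and
bounded with `inf a > 0`, `R ∈ ℝ` and `ε > 0`, then there is no function `z`, `C²` on
`(R,∞)` and `C¹` on `[R,∞)`, positive on `[R,∞)`, with `(1/x) log z(x) → 0` as `x → +∞`,
satisfying `-a z'' - q z' ≥ ε z` on `(R,∞)`. -/
theorem no_positive_strict_supersolution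
    (a q : ℝ → ℝ)
    (ha_cont : Continuous a) (hq_cont : Continuous q)
    (ha_bdd : ∃ M, ∀ x, |a x| ≤ M) (hq_bdd : ∃ M, ∀ x, |q x| ≤ M)
    (ha_pos : ∃ m > 0, ∀ x, m ≤ a x)
    (R ε : ℝ) (hε : 0 < ε) :
    ¬ ∃ z : ℝ → ℝ,
        ContDiffOn ℝ 2 z (Set.Ioi R) ∧
        ContDiffOn ℝ 1 z (Set.Ici R) ∧
        (∀ x ∈ Set.Ici R, 0 < z x) ∧
        Filter.Tendsto (fun x => Real.log (z x) / x) Filter.atTop (nhds 0) ∧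
        (∀ x ∈ Set.Ioi R, ε * z x ≤ -(a x * deriv (deriv z) x) - q x * deriv z x) :=
  no_positive_strict_supersolution_general a q ha_bdd hq_bdd ha_pos R ε hε
end

section
/- Let Lφ = a φ'' + q φ' + c φ with a, q, c : ℝ → ℝ continuous and bounded and inf_ℝ a > 0. Then for every R ∈ {−∞} ∪ ℝ one has λ̄₁(L,(R,∞)) ≥ λ̲₁(L,(R,∞)), where (R,∞) = ℝ when R = −∞. -/
open Real Filter Set

/-- The second order elliptic operator `L φ = a φ'' + q φ' + c φ`. -/
noncomputable def Lop (a q c φ : ℝ → ℝ) (x : ℝ) : ℝ :=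
  a x * deriv (deriv φ) x + q x * deriv φ x + c x * φ x

/-- The set `A_R` of admissible test functions on `(R,∞)`:
`C¹` on `[R,∞)`, `C²` on `(R,∞)`, positive on `[R,∞)`, with `φ'/φ` bounded on `(R,∞)`
and `(1/x) log φ(x) → 0` as `x → +∞`. -/
def AdmissibleOn (R : ℝ) (φ : ℝ → ℝ) : Prop :=
  ContDiffOn ℝ 1 φ (Set.Ici R) ∧ ContDiffOn ℝ 2 φ (Set.Ioi R) ∧
  (∀ x ∈ Set.Ici R, 0 < φ x) ∧
  (∃ M, ∀ x ∈ Set.Ioi R, |deriv φ x / φ x| ≤ M) ∧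
  Filter.Tendsto (fun x => Real.log (φ x) / x) Filter.atTop (nhds 0)

/-- The set `A_{-∞}` of admissible test functions on `ℝ`:
`C²` on `ℝ`, positive, with `φ'/φ` bounded and `(1/x) log φ(x) → 0` as `|x| → +∞`. -/
def AdmissibleAll (φ : ℝ → ℝ) : Prop :=
  ContDiff ℝ 2 φ ∧ (∀ x, 0 < φ x) ∧
  (∃ M, ∀ x, |deriv φ x / φ x| ≤ M) ∧
  Filter.Tendsto (fun x => Real.log (φ x) / x) Filter.atTop (nhds 0) ∧
  Filter.Tendsto (fun x => Real.log (φ x) / x) Filter.atBot (nhds 0)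

/-- The generalized principal eigenvalue `λ̲₁(L,(R,∞))`. -/
noncomputable def lamLower (a q c : ℝ → ℝ) (R : ℝ) : ℝ :=
  sSup {lam : ℝ | ∃ φ, AdmissibleOn R φ ∧ ∀ x ∈ Set.Ioi R, lam * φ x ≤ Lop a q c φ x}

/-- The generalized principal eigenvalue `λ̄₁(L,(R,∞))`. -/
noncomputable def lamUpper (a q c : ℝ → ℝ) (R : ℝ) : ℝ :=
  sInf {lam : ℝ | ∃ φ, AdmissibleOn R φ ∧ ∀ x ∈ Set.Ioi R, Lop a q c φ x ≤ lam * φ x}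

/-- The generalized principal eigenvalue `λ̲₁(L,ℝ)`. -/
noncomputable def lamLowerAll (a q c : ℝ → ℝ) : ℝ :=
  sSup {lam : ℝ | ∃ φ, AdmissibleAll φ ∧ ∀ x : ℝ, lam * φ x ≤ Lop a q c φ x}

/-- The generalized principal eigenvalue `λ̄₁(L,ℝ)`. -/
noncomputable def lamUpperAll (a q c : ℝ → ℝ) : ℝ :=
  sInf {lam : ℝ | ∃ φ, AdmissibleAll φ ∧ ∀ x : ℝ, Lop a q c φ x ≤ lam * φ x}

/-! If `Lφ ≥ λφ` and `Lψ ≤ μψ` with `λ > μ`, then `z = φ'/φ - ψ'/ψ = (log (φ/ψ))'` satisfies,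
by the Riccati equations of the two logarithmic derivatives,
`a z' + (a (φ'/φ + ψ'/ψ) + q) z ≥ λ - μ > 0`, with a bounded drift. Hence `z' ≥ ρ > 0`
wherever `|z| ≤ η`: `z` crosses the band `[-η, η]` only upwards and cannot stay in it forever,
so eventually `z ≥ η/2` or `z ≤ -η/2` on a half-line. Then `log (φ/ψ)` grows linearly,
contradicting `log φ(x)/x → 0` and `log ψ(x)/x → 0`. The whole-line case is the half-line case
on `(0, ∞)`. -/

open Topology

theorem mul_sub_le_image_sub_of_le_hasDerivAt_Ici {f f' : ℝ → ℝ} {x₀ r : ℝ}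
    (hf : ∀ x ∈ Ici x₀, HasDerivAt f (f' x) x) (hr : ∀ x ∈ Ici x₀, r ≤ f' x) {x : ℝ}
    (hx : x₀ ≤ x) : r * (x - x₀) ≤ f x - f x₀ :=
  (convex_Ici x₀).mul_sub_le_image_sub_of_le_deriv
    (fun y hy => (hf y hy).continuousAt.continuousWithinAt)
    (fun y hy => (hf y (interior_subset hy)).differentiableAt.differentiableWithinAt)
    (fun y hy => (hf y (interior_subset hy)).deriv ▸ hr y (interior_subset hy))
    x₀ self_mem_Ici x hx hx

theorem not_tendsto_div_atTop_zero_of_pos_le_hasDerivAt {f f' : ℝ → ℝ} {x₀ r : ℝ} (hr₀ : 0 < r)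
    (hf : ∀ x ∈ Ici x₀, HasDerivAt f (f' x) x) (hr : ∀ x ∈ Ici x₀, r ≤ f' x) :
    ¬Tendsto (fun x => f x / x) atTop (𝓝 0) := by
  intro hlim
  have hline : Tendsto (fun x => (f x₀ - r * x₀) / x + r) atTop (𝓝 r) := by
    simpa using (tendsto_const_nhds.div_atTop tendsto_id).add (tendsto_const_nhds (x := r))
  have : r ≤ 0 := by
    refine le_of_tendsto_of_tendsto hline hlim ?_
    filter_upwards [eventually_ge_atTop x₀, eventually_gt_atTop 0] with x hx hx₀
    rw [div_add' _ _ _ hx₀.ne', div_le_div_iff_of_pos_right hx₀]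
    linarith [mul_sub_le_image_sub_of_le_hasDerivAt_Ici hf hr hx]
  linarith

theorem le_of_hasDerivAt_pos_of_eq {z z' : ℝ → ℝ} {x₀ θ : ℝ}
    (hz : ∀ x ∈ Ici x₀, HasDerivAt z (z' x) x) (hθ : ∀ x ∈ Ici x₀, z x = θ → 0 < z' x)
    (h₀ : θ ≤ z x₀) {x : ℝ} (hx : x₀ ≤ x) : θ ≤ z x :=
  image_le_of_deriv_right_lt_deriv_boundary' (f := fun _ => θ) (f' := fun _ => 0)
    continuousOn_const (fun _ _ => hasDerivWithinAt_const _ _ _) h₀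
    (fun y hy => (hz y hy.1).continuousAt.continuousWithinAt)
    (fun y hy => (hz y hy.1).hasDerivWithinAt)
    (fun y hy h => hθ y hy.1 h.symm) ⟨hx, le_rfl⟩

theorem not_tendsto_div_atTop_zero_of_hasDerivAt_pos_near_zero {R η ρ : ℝ} {F z z' : ℝ → ℝ}
    (hη : 0 < η) (hρ : 0 < ρ)
    (hF : ∀ x ∈ Ioi R, HasDerivAt F (z x) x) (hz : ∀ x ∈ Ioi R, HasDerivAt z (z' x) x)
    (hz' : ∀ x ∈ Ioi R, |z x| ≤ η → ρ ≤ z' x) : ¬Tendsto (fun x => F x / x) atTop (𝓝 0) := by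
  have hIci : ∀ {x₀}, x₀ ∈ Ioi R → Ici x₀ ⊆ Ioi R := fun hx₀ => Ici_subset_Ioi.2 hx₀
  have barrier : ∀ θ, |θ| ≤ η → ∀ x₀ ∈ Ioi R, θ ≤ z x₀ → ∀ x ∈ Ici x₀, θ ≤ z x :=
    fun θ hθ x₀ hx₀ h₀ x hx => le_of_hasDerivAt_pos_of_eq (fun y hy => hz y (hIci hx₀ hy))
      (fun y hy hyθ => hρ.trans_le (hz' y (hIci hx₀ hy) (hyθ ▸ hθ))) h₀ hx
  have hη₂ : |η / 2| ≤ η := by rw [abs_of_pos (half_pos hη)]; linarith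
  intro hlim
  by_cases hup : ∃ x₀ ∈ Ioi R, η / 2 ≤ z x₀
  · obtain ⟨x₀, hx₀, h₀⟩ := hup
    exact not_tendsto_div_atTop_zero_of_pos_le_hasDerivAt (half_pos hη)
      (fun y hy => hF y (hIci hx₀ hy)) (barrier _ hη₂ x₀ hx₀ h₀) hlim
  push Not at hup
  by_cases hmid : ∃ x₀ ∈ Ioi R, -(η / 2) ≤ z x₀
  · obtain ⟨x₀, hx₀, h₀⟩ := hmid
    have hlow := barrier _ (by rwa [abs_neg]) x₀ hx₀ h₀
    have hx : x₀ ≤ x₀ + η / ρ := by linarith [div_pos hη hρ]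
    have hgrow := mul_sub_le_image_sub_of_le_hasDerivAt_Ici (fun y hy => hz y (hIci hx₀ hy))
      (fun y hy => hz' y (hIci hx₀ hy)
        (abs_le.2 ⟨by linarith [hlow y hy], by linarith [hup y (hIci hx₀ hy)]⟩)) hx
    rw [add_sub_cancel_left, mul_div_cancel₀ _ hρ.ne'] at hgrow
    linarith [hup _ (hIci hx₀ hx)]
  push Not at hmid
  have hR : R + 1 ∈ Ioi R := by simp
  refine not_tendsto_div_atTop_zero_of_pos_le_hasDerivAt (f := -F) (half_pos hη)
    (fun y hy => (hF y (hIci hR hy)).neg) (fun y hy => by linarith [hmid y (hIci hR hy)]) ?_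
  simpa [neg_div] using hlim.neg

theorem Lop_div_self {a q c φ : ℝ → ℝ} {x : ℝ} (hx : φ x ≠ 0) :
    Lop a q c φ x / φ x = a x * (deriv (deriv φ) x / φ x) + q x * logDeriv φ x + c x := by
  rw [logDeriv_apply, Lop]
  field_simp

theorem hasDerivAt_logDeriv {φ : ℝ → ℝ} {s : Set ℝ} {x : ℝ} (hφ : ContDiffOn ℝ 2 φ s)
    (hs : IsOpen s) (hx : x ∈ s) (hφx : φ x ≠ 0) :
    HasDerivAt (logDeriv φ) (deriv (deriv φ) x / φ x - logDeriv φ x ^ 2) x := by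
  have h₁ : HasDerivAt φ (deriv φ x) x :=
    ((hφ.contDiffAt (hs.mem_nhds hx)).differentiableAt (by norm_num)).hasDerivAt
  have h₂ : HasDerivAt (deriv φ) (deriv (deriv φ) x) x :=
    (((hφ.deriv_of_isOpen hs (m := 1) (by norm_num)).contDiffAt
      (hs.mem_nhds hx)).differentiableAt (by norm_num)).hasDerivAt
  show HasDerivAt (fun y => deriv φ y / φ y) _ x
  refine (h₂.div h₁ hφx).congr_deriv ?_
  rw [logDeriv_apply]
  field_simp

theorem AdmissibleAll.admissibleOn {φ : ℝ → ℝ} (hφ : AdmissibleAll φ) (R : ℝ) :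
    AdmissibleOn R φ :=
  let ⟨hC2, hpos, ⟨M, hM⟩, htop, _⟩ := hφ
  ⟨(hC2.of_le (by norm_num)).contDiffOn, hC2.contDiffOn, fun x _ => hpos x,
    ⟨M, fun x _ => hM x⟩, htop⟩

theorem admissibleAll_one : AdmissibleAll (fun _ => 1) :=
  ⟨contDiff_const, fun _ => one_pos, ⟨0, fun _ => by simp⟩, by simp, by simp⟩

theorem Lop_one (a q c : ℝ → ℝ) (x : ℝ) : Lop a q c (fun _ => 1) x = c x := by
  simp [Lop]

theorem sub_le_riccati_of_le_Lop_of_Lop_le {a q c φ ψ : ℝ → ℝ} {x lam mu : ℝ}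
    (hφ : 0 < φ x) (hψ : 0 < ψ x) (hsub : lam * φ x ≤ Lop a q c φ x)
    (hsup : Lop a q c ψ x ≤ mu * ψ x) :
    lam - mu ≤ a x * ((deriv (deriv φ) x / φ x - logDeriv φ x ^ 2) -
        (deriv (deriv ψ) x / ψ x - logDeriv ψ x ^ 2)) +
      (a x * (logDeriv φ x + logDeriv ψ x) + q x) * (logDeriv φ x - logDeriv ψ x) := by
  have h₁ : lam ≤ Lop a q c φ x / φ x := (le_div_iff₀ hφ).2 hsub
  have h₂ : Lop a q c ψ x / ψ x ≤ mu := (div_le_iff₀ hψ).2 hsup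
  rw [Lop_div_self hφ.ne'] at h₁
  rw [Lop_div_self hψ.ne'] at h₂
  linear_combination h₁ + h₂

theorem div_le_of_le_mul_add_mul {a A b K z z' δ : ℝ} (ha : 0 < a) (hA : a ≤ A) (hb : |b| ≤ K)
    (hδ : 0 ≤ δ) (hz : |z| ≤ δ / (2 * (K + 1))) (h : δ ≤ a * z' + b * z) : δ / (2 * A) ≤ z' := by
  have hK : 0 ≤ K := (abs_nonneg b).trans hb
  have hbz : b * z ≤ δ / 2 :=
    calc b * z ≤ |b| * |z| := (le_abs_self _).trans (abs_mul _ _).le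
      _ ≤ (K + 1) * (δ / (2 * (K + 1))) :=
          mul_le_mul (by linarith) hz (abs_nonneg _) (by linarith)
      _ = δ / 2 := by field_simp
  have haz' : δ / 2 ≤ a * z' := by linarith
  have hz' : 0 ≤ z' := nonneg_of_mul_nonneg_right (by linarith) ha
  rw [div_le_iff₀ (by linarith)]
  nlinarith [mul_le_mul_of_nonneg_right hA hz']

theorem le_of_subsolution_of_supersolution {R lam mu A Q : ℝ} {a q c φ ψ : ℝ → ℝ}
    (ha : ∀ x ∈ Ioi R, 0 < a x) (hA : ∀ x ∈ Ioi R, a x ≤ A) (hQ : ∀ x ∈ Ioi R, |q x| ≤ Q)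
    (hφ : AdmissibleOn R φ) (hψ : AdmissibleOn R ψ)
    (hsub : ∀ x ∈ Ioi R, lam * φ x ≤ Lop a q c φ x)
    (hsup : ∀ x ∈ Ioi R, Lop a q c ψ x ≤ mu * ψ x) : lam ≤ mu := by
  obtain ⟨-, hφC2, hφpos, ⟨Mφ, hMφ⟩, hφlim⟩ := hφ
  obtain ⟨-, hψC2, hψpos, ⟨Mψ, hMψ⟩, hψlim⟩ := hψ
  have hφ₀ : ∀ x ∈ Ioi R, 0 < φ x := fun x hx => hφpos x (Ioi_subset_Ici_self hx)
  have hψ₀ : ∀ x ∈ Ioi R, 0 < ψ x := fun x hx => hψpos x (Ioi_subset_Ici_self hx)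
  by_contra! hlt
  have hF : ∀ x ∈ Ioi R, HasDerivAt (fun y => log (φ y) - log (ψ y))
      (logDeriv φ x - logDeriv ψ x) x := fun x hx =>
    ((((hφC2.differentiableOn (by norm_num)).differentiableAt
      (isOpen_Ioi.mem_nhds hx)).hasDerivAt.log (hφ₀ x hx).ne').sub
    (((hψC2.differentiableOn (by norm_num)).differentiableAt
      (isOpen_Ioi.mem_nhds hx)).hasDerivAt.log (hψ₀ x hx).ne'))
  have hz : ∀ x ∈ Ioi R, HasDerivAt (fun y => logDeriv φ y - logDeriv ψ y)
      ((deriv (deriv φ) x / φ x - logDeriv φ x ^ 2) -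
        (deriv (deriv ψ) x / ψ x - logDeriv ψ x ^ 2)) x := fun x hx =>
    (hasDerivAt_logDeriv hφC2 isOpen_Ioi hx (hφ₀ x hx).ne').sub
      (hasDerivAt_logDeriv hψC2 isOpen_Ioi hx (hψ₀ x hx).ne')
  set K := A * (Mφ + Mψ) + Q
  have hdrift : ∀ x ∈ Ioi R, |a x * (logDeriv φ x + logDeriv ψ x) + q x| ≤ K := by
    intro x hx
    calc _ ≤ a x * (|logDeriv φ x| + |logDeriv ψ x|) + |q x| := by
          refine (abs_add_le _ _).trans (add_le_add_left ?_ _)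
          rw [abs_mul, abs_of_pos (ha x hx)]
          exact mul_le_mul_of_nonneg_left (abs_add_le _ _) (ha x hx).le
      _ ≤ K := add_le_add (mul_le_mul (hA x hx) (add_le_add (hMφ x hx) (hMψ x hx))
          (by positivity) ((ha x hx).le.trans (hA x hx))) (hQ x hx)
  have hR : R + 1 ∈ Ioi R := by simp
  have hK : 0 ≤ K := (abs_nonneg _).trans (hdrift _ hR)
  have hA₀ : 0 < A := (ha _ hR).trans_le (hA _ hR)
  have hδ : 0 < lam - mu := sub_pos.2 hlt
  refine not_tendsto_div_atTop_zero_of_hasDerivAt_pos_near_zero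
    (η := (lam - mu) / (2 * (K + 1))) (ρ := (lam - mu) / (2 * A)) (by positivity)
    (by positivity) hF hz (fun x hx hzx => div_le_of_le_mul_add_mul (ha x hx) (hA x hx)
      (hdrift x hx) hδ.le hzx (sub_le_riccati_of_le_Lop_of_Lop_le (hφ₀ x hx) (hψ₀ x hx)
        (hsub x hx) (hsup x hx))) ?_
  simpa [sub_div] using hφlim.sub hψlim

theorem lamLower_le_lamUpper_general
    (a q c : ℝ → ℝ)
    (ha_bdd : ∃ M, ∀ x, |a x| ≤ M) (hq_bdd : ∃ M, ∀ x, |q x| ≤ M)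
    (hc_bdd : ∃ M, ∀ x, |c x| ≤ M)
    (ha_pos : ∃ m > 0, ∀ x, m ≤ a x) :
    (∀ R : ℝ, lamLower a q c R ≤ lamUpper a q c R) ∧
      lamLowerAll a q c ≤ lamUpperAll a q c := by
  obtain ⟨A, hA⟩ := ha_bdd
  obtain ⟨Q, hQ⟩ := hq_bdd
  obtain ⟨C, hC⟩ := hc_bdd
  obtain ⟨m, hm, hma⟩ := ha_pos
  have compare : ∀ {R lam mu φ ψ}, AdmissibleOn R φ → AdmissibleOn R ψ →
      (∀ x ∈ Ioi R, lam * φ x ≤ Lop a q c φ x) →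
      (∀ x ∈ Ioi R, Lop a q c ψ x ≤ mu * ψ x) → lam ≤ mu :=
    le_of_subsolution_of_supersolution (fun x _ => hm.trans_le (hma x))
      (fun x _ => (le_abs_self _).trans (hA x)) (fun x _ => hQ x)
  -- `sSup ∅ = sInf ∅ = 0`, so both sets must be shown nonempty; `φ = 1` serves for both.
  have hsub_one : ∀ x, -C * 1 ≤ Lop a q c (fun _ => 1) x := fun x => by
    rw [Lop_one]; linarith [neg_abs_le (c x), hC x]
  have hsup_one : ∀ x, Lop a q c (fun _ => 1) x ≤ C * 1 := fun x => by
    rw [Lop_one]; linarith [le_abs_self (c x), hC x]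
  refine ⟨fun R => ?_, ?_⟩
  · exact csSup_le ⟨-C, _, admissibleAll_one.admissibleOn R, fun x _ => hsub_one x⟩
      fun lam ⟨φ, hφ, hsub⟩ => le_csInf ⟨C, _, admissibleAll_one.admissibleOn R,
        fun x _ => hsup_one x⟩ fun mu ⟨ψ, hψ, hsup⟩ => compare hφ hψ hsub hsup
  · exact csSup_le ⟨-C, _, admissibleAll_one, hsub_one⟩
      fun lam ⟨φ, hφ, hsub⟩ => le_csInf ⟨C, _, admissibleAll_one, hsup_one⟩
        fun mu ⟨ψ, hψ, hsup⟩ => compare (hφ.admissibleOn 0) (hψ.admissibleOn 0)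
          (fun x _ => hsub x) (fun x _ => hsup x)

/-- Proposition 3.1. For the operator `Lφ = a φ'' + q φ' + c φ` with
continuous bounded coefficients and `inf a > 0`, one has `λ̄₁(L,(R,∞)) ≥ λ̲₁(L,(R,∞))`
for every `R ∈ {-∞} ∪ ℝ`. -/
theorem lamLower_le_lamUpper
    (a q c : ℝ → ℝ)
    (ha_cont : Continuous a) (hq_cont : Continuous q) (hc_cont : Continuous c)
    (ha_bdd : ∃ M, ∀ x, |a x| ≤ M) (hq_bdd : ∃ M, ∀ x, |q x| ≤ M)
    (hc_bdd : ∃ M, ∀ x, |c x| ≤ M)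
    (ha_pos : ∃ m > 0, ∀ x, m ≤ a x) :
    (∀ R : ℝ, lamLower a q c R ≤ lamUpper a q c R) ∧
      lamLowerAll a q c ≤ lamUpperAll a q c :=
  lamLower_le_lamUpper_general a q c ha_bdd hq_bdd hc_bdd ha_pos
end

section
/- Let a, q, c : ℝ → ℝ be continuous and bounded, inf_ℝ a > 0, and assume liminf_{|x|→∞} (4 c(x) a(x) − q(x)²) > 0. For p ∈ ℝ let L_p φ = a φ'' + (2pa + q)φ' + (ap² + qp + c)φ, and define H̄(p) := lim_{R→+∞} λ̄₁(L_p,(R,∞)) and H̲(p) := lim_{R→+∞} λ̲₁(L_p,(R,∞)). Then H̄ and H̲ are locally Lipschitz-continuous on ℝ, and there exist constants C ≥ c₀ > 0 such that c₀(1 + |p|²) ≤ H̲(p) ≤ H̄(p) ≤ C(1 + |p|²) for all p ∈ ℝ. -/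
open Real Filter Set

/-!
The constant test function `1` bounds `λ̲₁(L_p)` and `λ̄₁(L_p)` by the infimum and the supremum
of the potential `a p² + q p + c`, which is at most `C (1 + p²)` and, far out, at least
`c₀ (1 + p²)` by monostability.

In Riccati form `L φ / φ = a (U' + U²) + q U + c`, `U = φ' / φ`, a sub-solution for `λ` and a
super-solution for `μ < λ` would force `g = U_φ - U_ψ` to increase at a uniform rate whenever `|g|`
is small. So `|g|` eventually stays large with a fixed sign and `log (φ / ψ)` grows linearly,
contradicting the growth condition in `A_R`. Hence `λ̲₁ ≤ λ̄₁`, and the bounds pass to the limit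
`R → ∞`.

Finally `φ ↦ φ ^ (1 ± |p' - p|)` turns a test function for `L_p` into one for `L_{p'}` at a cost
`O(|p' - p|)` in the eigenvalue (by completing a square), which gives local Lipschitz continuity.
-/

open Topology

theorem le_image_of_deriv_boundary_lt_deriv {g g' B B' : ℝ → ℝ} {y z : ℝ}
    (hg : ∀ x ∈ Icc y z, HasDerivAt g (g' x) x) (hB : ∀ x, HasDerivAt B (B' x) x)
    (hy : B y ≤ g y) (hcross : ∀ x ∈ Ico y z, g x = B x → B' x < g' x) :
    ∀ x ∈ Icc y z, B x ≤ g x := fun _ hx =>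
  neg_le_neg_iff.1 <| image_le_of_deriv_right_lt_deriv_boundary
    (f := fun x => -g x) (f' := fun x => -g' x) (B := fun x => -B x) (B' := fun x => -B' x)
    (fun x hx => (hg x hx).continuousAt.continuousWithinAt.neg)
    (fun x hx => (hg x (Ico_subset_Icc_self hx)).neg.hasDerivWithinAt) (neg_le_neg hy)
    (fun x => (hB x).neg) (fun x hx hgB => neg_lt_neg (hcross x hx (neg_inj.1 hgB))) hx

theorem not_tendsto_div_atTop_zero_of_le_deriv {w w' : ℝ → ℝ} {t V : ℝ} (hV : 0 < V)
    (hw : ∀ x, t ≤ x → HasDerivAt w (w' x) x) (hle : ∀ x, t ≤ x → V ≤ w' x) :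
    ¬ Tendsto (fun x => w x / x) atTop (𝓝 0) := by
  intro hlim
  have hlin : ∀ x, t ≤ x → w t + V / 2 * (x - t) ≤ w x := fun x hx =>
    le_image_of_deriv_boundary_lt_deriv (B' := fun _ => V / 2) (fun s hs => hw s hs.1)
      (fun s => ((hasDerivAt_id s).sub_const t).const_mul (V / 2) |>.const_add (w t) |>.congr_deriv
        (by simp)) (by simp) (fun s hs _ => by linarith [hle s hs.1]) x ⟨hx, le_rfl⟩
  have hlow : Tendsto (fun x => (w t - V / 2 * t) / x + V / 2) atTop (𝓝 (V / 2)) := by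
    simpa using (tendsto_const_nhds.div_atTop tendsto_id).add_const (V / 2)
  have hle' : ∀ᶠ x in atTop, (w t - V / 2 * t) / x + V / 2 ≤ w x / x := by
    filter_upwards [eventually_ge_atTop t, eventually_gt_atTop 0] with x hxt hx0
    rw [div_add' _ _ _ hx0.ne', div_le_div_iff_of_pos_right hx0]
    linarith [hlin x hxt]
  linarith [le_of_tendsto_of_tendsto hlow hlim hle']

theorem exists_forall_le_or_forall_lt_neg_of_band {g g' : ℝ → ℝ} {R δ V : ℝ} (hδ : 0 < δ)
    (hV : 0 < V) (hg : ∀ x ∈ Ioi R, HasDerivAt g (g' x) x)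
    (hband : ∀ x ∈ Ioi R, |g x| ≤ V → δ ≤ g' x) :
    (∃ t > R, ∀ x, t ≤ x → V ≤ g x) ∨ ∀ x ∈ Ioi R, g x < -V := by
  by_cases hstart : ∃ y ∈ Ioi R, -V ≤ g y
  swap
  · exact Or.inr fun x hx => not_le.1 fun h => hstart ⟨x, hx, h⟩
  obtain ⟨y, hyR, hy⟩ := hstart
  set t := y + 4 * V / δ
  have hyt : y ≤ t := le_add_of_nonneg_right (by positivity)
  -- `g` stays above the ramp of slope `δ / 2` from `-V` at `y` to `V` at `t`
  have hcross : ∀ x ∈ Ico y t, g x = -V + δ / 2 * (x - y) → δ / 2 < g' x := by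
    intro x hx hgx
    have hramp : δ / 2 * (x - y) ≤ 2 * V :=
      calc δ / 2 * (x - y) ≤ δ / 2 * (4 * V / δ) := by gcongr; linarith [hx.2]
        _ = 2 * V := by field_simp; ring
    have := hband x (hyR.trans_le hx.1) (abs_le.2 ⟨by nlinarith [hx.1], by linarith⟩)
    linarith
  have hgt : V ≤ g t := by
    have := le_image_of_deriv_boundary_lt_deriv (B := fun x => -V + δ / 2 * (x - y))
      (fun x hx => hg x (hyR.trans_le hx.1))
      (fun x => ((hasDerivAt_id x).sub_const y).const_mul (δ / 2) |>.const_add (-V)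
        |>.congr_deriv (by simp)) (by simpa using hy) hcross t ⟨hyt, le_rfl⟩
    have : δ / 2 * (t - y) = 2 * V := by simp only [t]; field_simp; ring
    linarith
  refine Or.inl ⟨t, hyR.trans_le hyt, fun x hx => ?_⟩
  exact le_image_of_deriv_boundary_lt_deriv (B' := fun _ => 0)
    (fun s hs => hg s (hyR.trans_le (hyt.trans hs.1))) (fun _ => hasDerivAt_const _ V) hgt
    (fun s hs hgs => hδ.trans_le (hband s (hyR.trans_le (hyt.trans hs.1))
      (by rw [hgs, abs_of_pos hV]))) x ⟨hx, le_rfl⟩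

theorem not_tendsto_div_atTop_zero_of_band {w g g' : ℝ → ℝ} {R δ V : ℝ} (hδ : 0 < δ)
    (hV : 0 < V) (hw : ∀ x ∈ Ioi R, HasDerivAt w (g x) x)
    (hg : ∀ x ∈ Ioi R, HasDerivAt g (g' x) x) (hband : ∀ x ∈ Ioi R, |g x| ≤ V → δ ≤ g' x) :
    ¬ Tendsto (fun x => w x / x) atTop (𝓝 0) := by
  rcases exists_forall_le_or_forall_lt_neg_of_band hδ hV hg hband with ⟨t, htR, ht⟩ | hneg
  · exact not_tendsto_div_atTop_zero_of_le_deriv hV (fun x hx => hw x (htR.trans_le hx)) ht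
  · intro hlim
    refine not_tendsto_div_atTop_zero_of_le_deriv (w := fun x => -w x) (t := R + 1) hV
      (fun x hx => (hw x (by simp only [mem_Ioi]; linarith)).neg)
      (fun x hx => by linarith [hneg x (by simp only [mem_Ioi]; linarith)]) ?_
    simpa [neg_div] using hlim.neg

theorem csSup_le_csSup_add_of_sub_mem {S T : Set ℝ} {k : ℝ} (hk : 0 ≤ k) (hS : S.Nonempty)
    (hT : BddAbove T) (hT0 : ∃ t ∈ T, 0 ≤ t) (h : ∀ s ∈ S, 0 ≤ s → s - k ∈ T) :
    sSup S ≤ sSup T + k := by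
  obtain ⟨t, ht, ht0⟩ := hT0
  refine csSup_le hS fun s hs => ?_
  rcases le_or_gt 0 s with hs0 | hs0
  · linarith [le_csSup hT (h s hs hs0)]
  · linarith [le_csSup hT ht]

theorem csInf_le_csInf_add_of_add_mem {S T : Set ℝ} {k : ℝ} (hS : S.Nonempty)
    (hT : BddBelow T) (h : ∀ s ∈ S, s + k ∈ T) : sInf T ≤ sInf S + k :=
  sub_le_iff_le_add.1 <| le_csInf hS fun s hs => sub_le_iff_le_add.2 (csInf_le hT (h s hs))

theorem locallyLipschitz_of_le_add_mul {H : ℝ → ℝ} (K : ℝ → ℝ)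
    (h : ∀ r p p', |p| ≤ r → |p'| ≤ r → 0 < |p' - p| → |p' - p| ≤ 1 →
      H p ≤ H p' + |p' - p| * K r) :
    LocallyLipschitz H := by
  intro x
  refine ⟨_, Metric.ball x (1 / 2), Metric.ball_mem_nhds x (by norm_num),
    LipschitzOnWith.of_le_add_mul' (K (|x| + 1)) fun p hp p' hp' => ?_⟩
  rw [Metric.mem_ball, Real.dist_eq] at hp hp'
  rcases eq_or_ne p p' with rfl | hne
  · simp
  rw [Real.dist_eq, mul_comm, abs_sub_comm]
  have := abs_sub_abs_le_abs_sub p x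
  have := abs_sub_abs_le_abs_sub p' x
  have := abs_sub_le p' x p
  refine h _ p p' (by linarith) (by linarith) (abs_pos.2 (sub_ne_zero.2 hne.symm)) ?_
  rw [abs_sub_comm x p] at this
  linarith

/-- `L φ / φ` written through the logarithmic derivative `U = φ' / φ`. -/
noncomputable def riccati (a q c U : ℝ → ℝ) (x : ℝ) : ℝ :=
  a x * (deriv U x + U x ^ 2) + q x * U x + c x

theorem admissibleOn_one (R : ℝ) : AdmissibleOn R fun _ => 1 :=
  ⟨contDiffOn_const, contDiffOn_const, fun _ _ => one_pos, ⟨0, fun _ _ => by simp⟩,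
    by simp⟩

namespace AdmissibleOn

variable {R x : ℝ} {φ : ℝ → ℝ}

theorem pos (h : AdmissibleOn R φ) (hx : x ∈ Ioi R) : 0 < φ x :=
  h.2.2.1 x (Ioi_subset_Ici_self hx)

theorem exists_abs_logDeriv_le (h : AdmissibleOn R φ) :
    ∃ M, ∀ x ∈ Ioi R, |logDeriv φ x| ≤ M :=
  h.2.2.2.1

theorem tendsto_log_div (h : AdmissibleOn R φ) :
    Tendsto (fun x => log (φ x) / x) atTop (𝓝 0) :=
  h.2.2.2.2

theorem hasDerivAt (h : AdmissibleOn R φ) (hx : x ∈ Ioi R) : HasDerivAt φ (deriv φ x) x :=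
  ((h.2.1.differentiableOn (by norm_num)).differentiableAt (isOpen_Ioi.mem_nhds hx)).hasDerivAt

theorem hasDerivAt_deriv (h : AdmissibleOn R φ) (hx : x ∈ Ioi R) :
    HasDerivAt (deriv φ) (deriv (deriv φ) x) x :=
  (((h.2.1.deriv_of_isOpen isOpen_Ioi (by norm_num) : ContDiffOn ℝ 1 _ _).differentiableOn
    (by norm_num)).differentiableAt (isOpen_Ioi.mem_nhds hx)).hasDerivAt

theorem hasDerivAt_log (h : AdmissibleOn R φ) (hx : x ∈ Ioi R) :
    HasDerivAt (fun y => log (φ y)) (logDeriv φ x) x :=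
  (h.hasDerivAt hx).log (h.pos hx).ne'

theorem hasDerivAt_logDeriv (h : AdmissibleOn R φ) (hx : x ∈ Ioi R) :
    HasDerivAt (logDeriv φ) (deriv (deriv φ) x / φ x - logDeriv φ x ^ 2) x := by
  have hφx := (h.pos hx).ne'
  refine ((h.hasDerivAt_deriv hx).div (h.hasDerivAt hx) hφx).congr_deriv ?_
  rw [logDeriv_apply]
  field_simp

theorem lop_eq_mul_riccati (h : AdmissibleOn R φ) (a q c : ℝ → ℝ) (hx : x ∈ Ioi R) :
    Lop a q c φ x = φ x * riccati a q c (logDeriv φ) x := by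
  have hφx := (h.pos hx).ne'
  rw [Lop, riccati, (h.hasDerivAt_logDeriv hx).deriv, logDeriv_apply]
  field_simp
  ring

theorem logDeriv_rpow (h : AdmissibleOn R φ) (θ : ℝ) (hx : x ∈ Ioi R) :
    logDeriv (fun y => φ y ^ θ) x = θ * logDeriv φ x := by
  have hφx := (h.pos hx).ne'
  rw [logDeriv_apply, ((h.hasDerivAt hx).rpow_const (Or.inl hφx)).deriv, logDeriv_apply,
    rpow_sub_one hφx]
  field_simp [(rpow_pos_of_pos (h.pos hx) θ).ne']

theorem rpow (h : AdmissibleOn R φ) (θ : ℝ) : AdmissibleOn R fun y => φ y ^ θ := by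
  obtain ⟨hC1, hC2, hpos, ⟨M, hM⟩, hlim⟩ := id h
  refine ⟨hC1.rpow_const_of_ne fun x hx => (hpos x hx).ne',
    hC2.rpow_const_of_ne fun x hx => (h.pos hx).ne', fun x hx => rpow_pos_of_pos (hpos x hx) θ,
    ⟨|θ| * M, fun x hx => ?_⟩, ?_⟩
  · rw [← logDeriv_apply, h.logDeriv_rpow θ hx, abs_mul]
    exact mul_le_mul_of_nonneg_left (hM x hx) (abs_nonneg θ)
  · refine (by simpa using hlim.const_mul θ : Tendsto (fun y => θ * (log (φ y) / y)) _ _).congr' ?_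
    filter_upwards [eventually_gt_atTop R] with y hy
    rw [log_rpow (h.pos hy), mul_div_assoc]

theorem deriv_logDeriv_rpow (h : AdmissibleOn R φ) (θ : ℝ) (hx : x ∈ Ioi R) :
    deriv (logDeriv fun y => φ y ^ θ) x = θ * deriv (logDeriv φ) x := by
  have heq : logDeriv (fun y => φ y ^ θ) =ᶠ[𝓝 x] fun y => θ * logDeriv φ y := by
    filter_upwards [isOpen_Ioi.mem_nhds hx] with y hy using h.logDeriv_rpow θ hy
  rw [heq.deriv_eq, deriv_const_mul_field']

end AdmissibleOn

def lamLowerSet (a q c : ℝ → ℝ) (R : ℝ) : Set ℝ :=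
  {lam | ∃ φ, AdmissibleOn R φ ∧ ∀ x ∈ Ioi R, lam * φ x ≤ Lop a q c φ x}

def lamUpperSet (a q c : ℝ → ℝ) (R : ℝ) : Set ℝ :=
  {mu | ∃ φ, AdmissibleOn R φ ∧ ∀ x ∈ Ioi R, Lop a q c φ x ≤ mu * φ x}

theorem div_le_sub_of_riccati_le_riccati {s qq cc CA CQ U₁ U₂ M₁ M₂ D₁ D₂ lam mu : ℝ}
    (hs : 0 < s) (hsA : s ≤ CA) (hq : |qq| ≤ CQ) (hU₁ : |U₁| ≤ M₁) (hU₂ : |U₂| ≤ M₂)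
    (hmu : mu < lam) (h₁ : lam ≤ s * (D₁ + U₁ ^ 2) + qq * U₁ + cc)
    (h₂ : s * (D₂ + U₂ ^ 2) + qq * U₂ + cc ≤ mu)
    (hsmall : (CA * (M₁ + M₂) + CQ) * |U₁ - U₂| ≤ (lam - mu) / 2) :
    (lam - mu) / (2 * CA) ≤ D₁ - D₂ := by
  have hcoef : |s * (U₁ + U₂) + qq| ≤ CA * (M₁ + M₂) + CQ :=
    calc |s * (U₁ + U₂) + qq| ≤ s * (|U₁| + |U₂|) + |qq| := by
          grw [abs_add_le, abs_mul, abs_of_pos hs, abs_add_le]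
      _ ≤ CA * (M₁ + M₂) + CQ := by
          gcongr
          linarith [(abs_nonneg U₁).trans hU₁, (abs_nonneg U₂).trans hU₂]
  have hdiff : |s * (U₁ ^ 2 - U₂ ^ 2) + qq * (U₁ - U₂)| ≤ (lam - mu) / 2 := by
    rw [show s * (U₁ ^ 2 - U₂ ^ 2) + qq * (U₁ - U₂) = (s * (U₁ + U₂) + qq) * (U₁ - U₂) by ring,
      abs_mul]
    exact (mul_le_mul_of_nonneg_right hcoef (abs_nonneg _)).trans hsmall
  have hsD : (lam - mu) / 2 ≤ s * (D₁ - D₂) := by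
    linarith [le_abs_self (s * (U₁ ^ 2 - U₂ ^ 2) + qq * (U₁ - U₂))]
  have hD : 0 < D₁ - D₂ := pos_of_mul_pos_right (by linarith) hs.le
  rw [div_le_iff₀ (by linarith)]
  nlinarith [mul_le_mul_of_nonneg_right hsA hD.le]

section EigenvalueSets

variable {a q c : ℝ → ℝ} {R CA CQ lam mu : ℝ}

theorem mem_lamLowerSet_iff : lam ∈ lamLowerSet a q c R ↔
    ∃ φ, AdmissibleOn R φ ∧ ∀ x ∈ Ioi R, lam ≤ riccati a q c (logDeriv φ) x := by
  refine exists_congr fun φ => and_congr_right fun hφ => forall₂_congr fun x hx => ?_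
  rw [hφ.lop_eq_mul_riccati a q c hx, mul_comm lam, mul_le_mul_iff_right₀ (hφ.pos hx)]

theorem mem_lamUpperSet_iff : mu ∈ lamUpperSet a q c R ↔
    ∃ φ, AdmissibleOn R φ ∧ ∀ x ∈ Ioi R, riccati a q c (logDeriv φ) x ≤ mu := by
  refine exists_congr fun φ => and_congr_right fun hφ => forall₂_congr fun x hx => ?_
  rw [hφ.lop_eq_mul_riccati a q c hx, mul_comm mu, mul_le_mul_iff_right₀ (hφ.pos hx)]

theorem mem_lamLowerSet_of_le (h : ∀ x ∈ Ioi R, lam ≤ c x) : lam ∈ lamLowerSet a q c R :=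
  ⟨fun _ => 1, admissibleOn_one R, fun x hx => by simpa [Lop] using h x hx⟩

theorem mem_lamUpperSet_of_le (h : ∀ x ∈ Ioi R, c x ≤ mu) : mu ∈ lamUpperSet a q c R :=
  ⟨fun _ => 1, admissibleOn_one R, fun x hx => by simpa [Lop] using h x hx⟩

theorem le_of_mem_lamLowerSet_of_mem_lamUpperSet
    (ha : ∀ x ∈ Ioi R, 0 < a x ∧ a x ≤ CA) (hq : ∀ x ∈ Ioi R, |q x| ≤ CQ)
    (hlam : lam ∈ lamLowerSet a q c R) (hmu : mu ∈ lamUpperSet a q c R) : lam ≤ mu := by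
  obtain ⟨φ, hφ, hφlam⟩ := mem_lamLowerSet_iff.1 hlam
  obtain ⟨ψ, hψ, hψmu⟩ := mem_lamUpperSet_iff.1 hmu
  obtain ⟨M₁, hM₁⟩ := hφ.exists_abs_logDeriv_le
  obtain ⟨M₂, hM₂⟩ := hψ.exists_abs_logDeriv_le
  by_contra! hlt
  have hR : R + 1 ∈ Ioi R := by simp
  have hCA : 0 < CA := (ha _ hR).1.trans_le (ha _ hR).2
  set B := CA * (M₁ + M₂) + CQ
  have hB : 0 ≤ B := by
    have := (abs_nonneg _).trans (hM₁ _ hR)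
    have := (abs_nonneg _).trans (hM₂ _ hR)
    have := (abs_nonneg _).trans (hq _ hR)
    positivity
  have hV : 0 < (lam - mu) / (2 * (B + 1)) := div_pos (sub_pos.2 hlt) (by positivity)
  -- `log (φ / ψ)` has derivative `g = φ'/φ - ψ'/ψ`, which increases at a uniform rate while small
  refine not_tendsto_div_atTop_zero_of_band (w := fun x => log (φ x) - log (ψ x))
    (g := logDeriv φ - logDeriv ψ) (div_pos (sub_pos.2 hlt) (mul_pos two_pos hCA)) hV
    (fun x hx => (hφ.hasDerivAt_log hx).sub (hψ.hasDerivAt_log hx))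
    (fun x hx => (hφ.hasDerivAt_logDeriv hx).differentiableAt.hasDerivAt.sub
      (hψ.hasDerivAt_logDeriv hx).differentiableAt.hasDerivAt) (fun x hx hgx => ?_) ?_
  · refine div_le_sub_of_riccati_le_riccati (ha x hx).1 (ha x hx).2 (hq x hx) (hM₁ x hx)
      (hM₂ x hx) hlt (hφlam x hx) (hψmu x hx) ?_
    calc B * |(logDeriv φ - logDeriv ψ) x| ≤ (B + 1) * ((lam - mu) / (2 * (B + 1))) := by
          gcongr; linarith
      _ = (lam - mu) / 2 := by field_simp
  · simpa [sub_div] using hφ.tendsto_log_div.sub hψ.tendsto_log_div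

theorem bddAbove_lamLowerSet (ha : ∀ x ∈ Ioi R, 0 < a x ∧ a x ≤ CA)
    (hq : ∀ x ∈ Ioi R, |q x| ≤ CQ) (hT : (lamUpperSet a q c R).Nonempty) :
    BddAbove (lamLowerSet a q c R) :=
  hT.mono fun _ hmu _ hlam => le_of_mem_lamLowerSet_of_mem_lamUpperSet ha hq hlam hmu

theorem bddBelow_lamUpperSet (ha : ∀ x ∈ Ioi R, 0 < a x ∧ a x ≤ CA)
    (hq : ∀ x ∈ Ioi R, |q x| ≤ CQ) (hS : (lamLowerSet a q c R).Nonempty) :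
    BddBelow (lamUpperSet a q c R) :=
  hS.mono fun _ hlam _ hmu => le_of_mem_lamLowerSet_of_mem_lamUpperSet ha hq hlam hmu

theorem le_lamLower (ha : ∀ x ∈ Ioi R, 0 < a x ∧ a x ≤ CA) (hq : ∀ x ∈ Ioi R, |q x| ≤ CQ)
    (hlam : lam ∈ lamLowerSet a q c R) (hT : (lamUpperSet a q c R).Nonempty) :
    lam ≤ lamLower a q c R :=
  le_csSup (bddAbove_lamLowerSet ha hq hT) hlam

theorem lamUpper_le (ha : ∀ x ∈ Ioi R, 0 < a x ∧ a x ≤ CA) (hq : ∀ x ∈ Ioi R, |q x| ≤ CQ)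
    (hmu : mu ∈ lamUpperSet a q c R) (hS : (lamLowerSet a q c R).Nonempty) :
    lamUpper a q c R ≤ mu :=
  csInf_le (bddBelow_lamUpperSet ha hq hS) hmu

theorem lamLower_le_lamUpper_s6 (ha : ∀ x ∈ Ioi R, 0 < a x ∧ a x ≤ CA)
    (hq : ∀ x ∈ Ioi R, |q x| ≤ CQ) (hS : (lamLowerSet a q c R).Nonempty)
    (hT : (lamUpperSet a q c R).Nonempty) : lamLower a q c R ≤ lamUpper a q c R :=
  csSup_le hS fun _ hlam => le_csInf hT fun _ hmu =>
    le_of_mem_lamLowerSet_of_mem_lamUpperSet ha hq hlam hmu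

end EigenvalueSets

/-- Coefficients of `L_p φ = e^{-px} L (e^{px} φ)`. -/
def driftP (a q : ℝ → ℝ) (p x : ℝ) : ℝ := 2 * p * a x + q x

def potentialP (a q c : ℝ → ℝ) (p x : ℝ) : ℝ := a x * p ^ 2 + q x * p + c x

theorem riccati_driftP (a q c U : ℝ → ℝ) (p x : ℝ) :
    riccati a (driftP a q p) (potentialP a q c p) U x =
      a x * (deriv U x + (U x + p) ^ 2) + q x * (U x + p) + c x := by
  simp only [riccati, driftP, potentialP]
  ring

theorem abs_driftP_le {a q : ℝ → ℝ} {CA CQ p x : ℝ} (ha : 0 ≤ a x ∧ a x ≤ CA)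
    (hq : |q x| ≤ CQ) : |driftP a q p x| ≤ 2 * |p| * CA + CQ :=
  calc |driftP a q p x| ≤ 2 * |p| * a x + |q x| := by
        grw [driftP, abs_add_le, abs_mul, abs_mul, abs_of_nonneg ha.1, abs_two]
    _ ≤ 2 * |p| * CA + CQ := by gcongr; exact ha.2

theorem riccati_shift_estimate {s qq cc CA CQ CC U D p p' r t : ℝ} (hs : 0 ≤ s)
    (hsA : s ≤ CA) (hq : |qq| ≤ CQ) (hc : |cc| ≤ CC) (hp : |p| ≤ r) (ht : -1 ≤ t)
    (hpp : |p' - p| ≤ |t|) :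
    -(t ^ 2 * (CA * (1 + r) ^ 2 + CQ * (1 + r) + CC)) ≤
      t * ((s * ((1 + t) * D + ((1 + t) * U + p') ^ 2) + qq * ((1 + t) * U + p') + cc)
        - (1 + t) * (s * (D + (U + p) ^ 2) + qq * (U + p) + cc)) := by
  set e := p' - (1 + t) * p with he_def
  have he : |e| ≤ |t| * (1 + r) :=
    calc |e| = |(p' - p) - t * p| := by rw [he_def]; ring_nf
      _ ≤ |p' - p| + |t| * |p| := by rw [← abs_mul]; exact abs_sub _ _
      _ ≤ |t| + |t| * r := by gcongr
      _ = |t| * (1 + r) := by ring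
  have he2 : e ^ 2 ≤ t ^ 2 * (1 + r) ^ 2 := by
    rw [← sq_abs e, ← sq_abs t, ← mul_pow]
    gcongr
  have hqe : |t * qq * e| ≤ t ^ 2 * (CQ * (1 + r)) := by
    rw [abs_mul, abs_mul, ← sq_abs t, sq]
    calc |t| * |qq| * |e| ≤ |t| * CQ * (|t| * (1 + r)) := by
          gcongr
          exact mul_nonneg (abs_nonneg t) ((abs_nonneg qq).trans hq)
      _ = |t| * |t| * (CQ * (1 + r)) := by ring
  have hcc : t ^ 2 * cc ≤ t ^ 2 * CC :=
    mul_le_mul_of_nonneg_left ((le_abs_self cc).trans hc) (sq_nonneg t)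
  -- completing the square in `U + p`
  have hsq : 0 ≤ s * (1 + t) * (t * (U + p) + e) ^ 2 := by
    have : 0 ≤ 1 + t := by linarith
    positivity
  have hse : s * e ^ 2 ≤ CA * (t ^ 2 * (1 + r) ^ 2) :=
    mul_le_mul hsA he2 (sq_nonneg e) (hs.trans hsA)
  have hid : t * ((s * ((1 + t) * D + ((1 + t) * U + p') ^ 2) + qq * ((1 + t) * U + p') + cc)
      - (1 + t) * (s * (D + (U + p) ^ 2) + qq * (U + p) + cc)) =
      s * (1 + t) * (t * (U + p) + e) ^ 2 - s * e ^ 2 + t * qq * e - t ^ 2 * cc := by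
    rw [he_def]; ring
  rw [hid]
  linarith [neg_abs_le (t * qq * e)]

theorem potential_le_mul_one_add_sq {s qq cc CA CQ CC p : ℝ} (hs : 0 ≤ s) (hsA : s ≤ CA)
    (hq : |qq| ≤ CQ) (hc : |cc| ≤ CC) :
    s * p ^ 2 + qq * p + cc ≤ (CA + CQ + CC) * (1 + p ^ 2) := by
  have hp : |p| ≤ 1 + p ^ 2 := by nlinarith [sq_abs p, sq_nonneg (|p| - 1)]
  have hqp : qq * p ≤ CQ * (1 + p ^ 2) := (le_abs_self _).trans <| by
    rw [abs_mul]; exact mul_le_mul hq hp (abs_nonneg p) ((abs_nonneg qq).trans hq)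
  have hCC : cc ≤ CC * (1 + p ^ 2) := by
    nlinarith [le_abs_self cc, (abs_nonneg cc).trans hc, sq_nonneg p]
  nlinarith [mul_le_mul_of_nonneg_right hsA (sq_nonneg p), hs.trans hsA]

/-- Monostability makes the potential of `L_p` coercive, uniformly in the coefficients. -/
theorem exists_pos_mul_one_add_sq_le_potential {al CA CQ m : ℝ} (hal : 0 < al) (hCA : al ≤ CA)
    (hm : 0 < m) : ∃ c₀ > 0, ∀ s qq cc p, al ≤ s → s ≤ CA → |qq| ≤ CQ →
      m ≤ 4 * cc * s - qq ^ 2 → c₀ * (1 + p ^ 2) ≤ s * p ^ 2 + qq * p + cc := by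
  set ε := m / (m + CQ ^ 2)
  have hε0 : 0 < ε := by positivity
  have hε1 : ε ≤ 1 := div_le_one_of_le₀ (by nlinarith [sq_nonneg CQ]) (by positivity)
  have hεm : ε * CQ ^ 2 + ε * m = m := by simp only [ε]; field_simp; ring
  refine ⟨ε * min (2 * al ^ 2) m / (4 * CA),
    div_pos (mul_pos hε0 (lt_min (by positivity) hm)) (by linarith),
    fun s qq cc p hs hsA hq hmono => ?_⟩
  set F := s * p ^ 2 + qq * p + cc
  set A := 2 * s * p + qq
  have h4 : 4 * s * F = A ^ 2 + (4 * cc * s - qq ^ 2) := by simp only [F, A]; ring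
  have hq2 : qq ^ 2 ≤ CQ ^ 2 := by
    rw [← sq_abs qq]; exact pow_le_pow_left₀ (abs_nonneg qq) hq 2
  have hs2 : al ^ 2 ≤ s ^ 2 := pow_le_pow_left₀ hal.le hs 2
  -- `(2 s p)² = (A - qq)² ≤ 2 A² + 2 qq²`
  have hA : 2 * al ^ 2 * p ^ 2 - CQ ^ 2 ≤ A ^ 2 := by
    nlinarith [sq_nonneg (A + qq), mul_le_mul_of_nonneg_right hs2 (sq_nonneg p)]
  have hεA : ε * (2 * al ^ 2 * p ^ 2 - CQ ^ 2) ≤ A ^ 2 := by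
    nlinarith [mul_nonneg (sub_nonneg.2 hε1) (sq_nonneg A), mul_nonneg hε0.le (sub_nonneg.2 hA)]
  have hmin : min (2 * al ^ 2) m * (1 + p ^ 2) ≤ 2 * al ^ 2 * p ^ 2 + m := by
    nlinarith [min_le_left (2 * al ^ 2) m, min_le_right (2 * al ^ 2) m, sq_nonneg p]
  have hF : ε * min (2 * al ^ 2) m * (1 + p ^ 2) ≤ 4 * s * F := by
    nlinarith [mul_le_mul_of_nonneg_left hmin hε0.le]
  have hF0 : 0 ≤ F := by
    refine nonneg_of_mul_nonneg_right (a := 4 * s) (hF.trans' ?_) (by linarith)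
    exact mul_nonneg (mul_nonneg hε0.le (le_min (by positivity) hm.le)) (by positivity)
  rw [div_mul_eq_mul_div, div_le_iff₀ (by linarith)]
  nlinarith [mul_le_mul_of_nonneg_right hsA hF0]

section ShiftedOperator

variable {a q c : ℝ → ℝ} {R CA CQ CC r p p' : ℝ}

theorem sub_mem_lamLowerSet_driftP (ha : ∀ x ∈ Ioi R, 0 ≤ a x ∧ a x ≤ CA)
    (hq : ∀ x ∈ Ioi R, |q x| ≤ CQ) (hc : ∀ x ∈ Ioi R, |c x| ≤ CC) (hp : |p| ≤ r)
    (hpp : 0 < |p' - p|) {lam : ℝ} (hlam0 : 0 ≤ lam)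
    (hlam : lam ∈ lamLowerSet a (driftP a q p) (potentialP a q c p) R) :
    lam - |p' - p| * (CA * (1 + r) ^ 2 + CQ * (1 + r) + CC) ∈
      lamLowerSet a (driftP a q p') (potentialP a q c p') R := by
  obtain ⟨φ, hφ, hφlam⟩ := mem_lamLowerSet_iff.1 hlam
  set h := |p' - p|
  refine mem_lamLowerSet_iff.2 ⟨_, hφ.rpow (1 + h), fun x hx => ?_⟩
  have hest := riccati_shift_estimate (U := logDeriv φ x) (D := deriv (logDeriv φ) x)
    (ha x hx).1 (ha x hx).2 (hq x hx) (hc x hx) hp (by linarith) (abs_of_pos hpp).ge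
  have hY := hφlam x hx
  rw [riccati_driftP] at hY ⊢
  rw [hφ.logDeriv_rpow _ hx, hφ.deriv_logDeriv_rpow _ hx]
  nlinarith [mul_le_mul_of_nonneg_left hY hpp.le, mul_nonneg hpp.le hlam0]

theorem add_mem_lamUpperSet_driftP (ha : ∀ x ∈ Ioi R, 0 ≤ a x ∧ a x ≤ CA)
    (hq : ∀ x ∈ Ioi R, |q x| ≤ CQ) (hc : ∀ x ∈ Ioi R, |c x| ≤ CC) (hp : |p| ≤ r)
    (hpp : 0 < |p' - p|) (hpp1 : |p' - p| ≤ 1) {mu : ℝ} (hmu0 : 0 ≤ mu)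
    (hmu : mu ∈ lamUpperSet a (driftP a q p) (potentialP a q c p) R) :
    mu + |p' - p| * (CA * (1 + r) ^ 2 + CQ * (1 + r) + CC) ∈
      lamUpperSet a (driftP a q p') (potentialP a q c p') R := by
  obtain ⟨φ, hφ, hφmu⟩ := mem_lamUpperSet_iff.1 hmu
  set h := |p' - p|
  refine mem_lamUpperSet_iff.2 ⟨_, hφ.rpow (1 + -h), fun x hx => ?_⟩
  have hest := riccati_shift_estimate (U := logDeriv φ x) (D := deriv (logDeriv φ) x) (t := -h)
    (ha x hx).1 (ha x hx).2 (hq x hx) (hc x hx) hp (by linarith) (by rw [abs_neg, abs_of_pos hpp])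
  have hY := hφmu x hx
  rw [riccati_driftP] at hY ⊢
  rw [hφ.logDeriv_rpow _ hx, hφ.deriv_logDeriv_rpow _ hx]
  nlinarith [mul_le_mul_of_nonneg_left hY hpp.le, mul_nonneg hpp.le hmu0]

theorem lamLower_driftP_le_add (ha : ∀ x ∈ Ioi R, 0 < a x ∧ a x ≤ CA)
    (hq : ∀ x ∈ Ioi R, |q x| ≤ CQ) (hc : ∀ x ∈ Ioi R, |c x| ≤ CC)
    (hS : ∀ p, ∃ lam ∈ lamLowerSet a (driftP a q p) (potentialP a q c p) R, 0 ≤ lam)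
    (hT : ∀ p, (lamUpperSet a (driftP a q p) (potentialP a q c p) R).Nonempty)
    (hp : |p| ≤ r) (hpp : 0 < |p' - p|) :
    lamLower a (driftP a q p) (potentialP a q c p) R ≤
      lamLower a (driftP a q p') (potentialP a q c p') R +
        |p' - p| * (CA * (1 + r) ^ 2 + CQ * (1 + r) + CC) := by
  have ha' x (hx : x ∈ Ioi R) : 0 ≤ a x ∧ a x ≤ CA := ⟨(ha x hx).1.le, (ha x hx).2⟩
  have hK : 0 ≤ CA * (1 + r) ^ 2 + CQ * (1 + r) + CC := by
    have hR : R + 1 ∈ Ioi R := by simp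
    have hCA := (ha' _ hR).1.trans (ha' _ hR).2
    have hCQ := (abs_nonneg _).trans (hq _ hR)
    have hCC := (abs_nonneg _).trans (hc _ hR)
    have hr := (abs_nonneg p).trans hp
    positivity
  obtain ⟨lam, hlam, -⟩ := hS p
  exact csSup_le_csSup_add_of_sub_mem (mul_nonneg (abs_nonneg _) hK) ⟨lam, hlam⟩
    (bddAbove_lamLowerSet ha (fun x hx => abs_driftP_le (ha' x hx) (hq x hx)) (hT p'))
    (hS p') fun _ hs hs0 => sub_mem_lamLowerSet_driftP ha' hq hc hp hpp hs0 hs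

theorem lamUpper_driftP_le_add (ha : ∀ x ∈ Ioi R, 0 < a x ∧ a x ≤ CA)
    (hq : ∀ x ∈ Ioi R, |q x| ≤ CQ) (hc : ∀ x ∈ Ioi R, |c x| ≤ CC)
    (hS : ∀ p, ∃ lam ∈ lamLowerSet a (driftP a q p) (potentialP a q c p) R, 0 ≤ lam)
    (hT : ∀ p, (lamUpperSet a (driftP a q p) (potentialP a q c p) R).Nonempty)
    (hp' : |p'| ≤ r) (hpp : 0 < |p' - p|) (hpp1 : |p' - p| ≤ 1) :
    lamUpper a (driftP a q p) (potentialP a q c p) R ≤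
      lamUpper a (driftP a q p') (potentialP a q c p') R +
        |p' - p| * (CA * (1 + r) ^ 2 + CQ * (1 + r) + CC) := by
  have ha' x (hx : x ∈ Ioi R) : 0 ≤ a x ∧ a x ≤ CA := ⟨(ha x hx).1.le, (ha x hx).2⟩
  have hdrift p x (hx : x ∈ Ioi R) : |driftP a q p x| ≤ 2 * |p| * CA + CQ :=
    abs_driftP_le (ha' x hx) (hq x hx)
  obtain ⟨lam, hlam, -⟩ := hS p
  obtain ⟨lam', hlam', hlam'0⟩ := hS p'
  refine csInf_le_csInf_add_of_add_mem (hT p') (bddBelow_lamUpperSet ha (hdrift p) ⟨lam, hlam⟩)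
    fun mu hmu => ?_
  rw [abs_sub_comm] at hpp hpp1 ⊢
  exact add_mem_lamUpperSet_driftP ha' hq hc hp' hpp hpp1
    (hlam'0.trans (le_of_mem_lamLowerSet_of_mem_lamUpperSet ha (hdrift p') hlam' hmu)) hmu

theorem driftP_eigenvalue_estimates (ha : ∀ x ∈ Ioi R, 0 < a x ∧ a x ≤ CA)
    (hq : ∀ x ∈ Ioi R, |q x| ≤ CQ) (hc : ∀ x ∈ Ioi R, |c x| ≤ CC) {c₀ C : ℝ} (hc₀ : 0 ≤ c₀)
    (hS : ∀ p, c₀ * (1 + p ^ 2) ∈ lamLowerSet a (driftP a q p) (potentialP a q c p) R)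
    (hT : ∀ p, C * (1 + p ^ 2) ∈ lamUpperSet a (driftP a q p) (potentialP a q c p) R) :
    (∀ p, c₀ * (1 + p ^ 2) ≤ lamLower a (driftP a q p) (potentialP a q c p) R ∧
      lamLower a (driftP a q p) (potentialP a q c p) R ≤
        lamUpper a (driftP a q p) (potentialP a q c p) R ∧
      lamUpper a (driftP a q p) (potentialP a q c p) R ≤ C * (1 + p ^ 2)) ∧
    ∀ r p p', |p| ≤ r → |p'| ≤ r → 0 < |p' - p| → |p' - p| ≤ 1 →
      lamLower a (driftP a q p) (potentialP a q c p) R ≤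
        lamLower a (driftP a q p') (potentialP a q c p') R +
          |p' - p| * (CA * (1 + r) ^ 2 + CQ * (1 + r) + CC) ∧
      lamUpper a (driftP a q p) (potentialP a q c p) R ≤
        lamUpper a (driftP a q p') (potentialP a q c p') R +
          |p' - p| * (CA * (1 + r) ^ 2 + CQ * (1 + r) + CC) := by
  have hdrift p x (hx : x ∈ Ioi R) : |driftP a q p x| ≤ 2 * |p| * CA + CQ :=
    abs_driftP_le ⟨(ha x hx).1.le, (ha x hx).2⟩ (hq x hx)
  have hS0 p : ∃ lam ∈ lamLowerSet a (driftP a q p) (potentialP a q c p) R, 0 ≤ lam :=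
    ⟨_, hS p, mul_nonneg hc₀ (by positivity)⟩
  refine ⟨fun p => ⟨le_lamLower ha (hdrift p) (hS p) ⟨_, hT p⟩,
    lamLower_le_lamUpper_s6 ha (hdrift p) ⟨_, hS p⟩ ⟨_, hT p⟩,
    lamUpper_le ha (hdrift p) (hT p) ⟨_, hS p⟩⟩, fun r p p' hp hp' hpp hpp1 =>
    ⟨lamLower_driftP_le_add ha hq hc hS0 (fun p => ⟨_, hT p⟩) hp hpp,
      lamUpper_driftP_le_add ha hq hc hS0 (fun p => ⟨_, hT p⟩) hp' hpp hpp1⟩⟩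

end ShiftedOperator

theorem Hamiltonian_properties_general
    (a q c : ℝ → ℝ)
    (ha_bdd : ∃ M, ∀ x, |a x| ≤ M) (hq_bdd : ∃ M, ∀ x, |q x| ≤ M)
    (hc_bdd : ∃ M, ∀ x, |c x| ≤ M)
    (ha_pos : ∃ m > 0, ∀ x, m ≤ a x)
    (hmono : ∃ m > 0, ∃ R₀ : ℝ, ∀ x : ℝ, R₀ ≤ |x| → m ≤ 4 * c x * a x - q x ^ 2)
    (Hlow Hup : ℝ → ℝ)
    (hHlow : ∀ p : ℝ, Filter.Tendsto
      (fun R => lamLower a (fun x => 2 * p * a x + q x)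
        (fun x => a x * p ^ 2 + q x * p + c x) R) Filter.atTop (nhds (Hlow p)))
    (hHup : ∀ p : ℝ, Filter.Tendsto
      (fun R => lamUpper a (fun x => 2 * p * a x + q x)
        (fun x => a x * p ^ 2 + q x * p + c x) R) Filter.atTop (nhds (Hup p))) :
    LocallyLipschitz Hlow ∧ LocallyLipschitz Hup ∧
    ∃ C c₀ : ℝ, 0 < c₀ ∧ c₀ ≤ C ∧
      ∀ p : ℝ, c₀ * (1 + |p| ^ 2) ≤ Hlow p ∧ Hlow p ≤ Hup p ∧
        Hup p ≤ C * (1 + |p| ^ 2) := by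
  obtain ⟨CA, hCA⟩ := ha_bdd
  obtain ⟨CQ, hq⟩ := hq_bdd
  obtain ⟨CC, hc⟩ := hc_bdd
  obtain ⟨al, hal, hal_le⟩ := ha_pos
  obtain ⟨m, hm, R₀, hmono⟩ := hmono
  have ha x : 0 < a x ∧ a x ≤ CA := ⟨hal.trans_le (hal_le x), (le_abs_self _).trans (hCA x)⟩
  obtain ⟨c₀, hc₀, hcoercive⟩ :=
    exists_pos_mul_one_add_sq_le_potential (CQ := CQ) hal ((hal_le 0).trans (ha 0).2) hm
  have hest : ∀ᶠ R in atTop, _ := (eventually_ge_atTop (max R₀ 0)).mono fun R hR =>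
    driftP_eigenvalue_estimates (fun x _ => ha x) (fun x _ => hq x) (fun x _ => hc x) hc₀.le
      (fun p => mem_lamLowerSet_of_le fun x hx => hcoercive _ _ _ p (hal_le x) (ha x).2 (hq x)
        (hmono x ((le_max_left _ _).trans (hR.trans (hx.le.trans (le_abs_self x))))))
      (fun p => mem_lamUpperSet_of_le (mu := (CA + CQ + CC) * (1 + p ^ 2)) fun x _ =>
        potential_le_mul_one_add_sq (ha x).1.le (ha x).2 (hq x) (hc x))
  have hbounds p : c₀ * (1 + |p| ^ 2) ≤ Hlow p ∧ Hlow p ≤ Hup p ∧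
      Hup p ≤ (CA + CQ + CC) * (1 + |p| ^ 2) := by
    rw [sq_abs]
    exact ⟨ge_of_tendsto (hHlow p) (hest.mono fun _ h => (h.1 p).1),
      le_of_tendsto_of_tendsto (hHlow p) (hHup p) (hest.mono fun _ h => (h.1 p).2.1),
      le_of_tendsto (hHup p) (hest.mono fun _ h => (h.1 p).2.2)⟩
  refine ⟨locallyLipschitz_of_le_add_mul _ fun r p p' hp hp' hpp hpp1 =>
      le_of_tendsto_of_tendsto (hHlow p) ((hHlow p').add_const _)
        (hest.mono fun _ h => (h.2 r p p' hp hp' hpp hpp1).1),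
    locallyLipschitz_of_le_add_mul _ fun r p p' hp hp' hpp hpp1 =>
      le_of_tendsto_of_tendsto (hHup p) ((hHup p').add_const _)
        (hest.mono fun _ h => (h.2 r p p' hp hp' hpp hpp1).2),
    _, c₀, hc₀, by simpa using (hbounds 0).1.trans ((hbounds 0).2.1.trans (hbounds 0).2.2),
    hbounds⟩

/-- Proposition 2.3. Under the monostability condition
`liminf_{|x|→∞} (4 c a - q²) > 0`, the Hamiltonians
`H̲(p) = lim_{R→∞} λ̲₁(L_p,(R,∞))` and `H̄(p) = lim_{R→∞} λ̄₁(L_p,(R,∞))` are locally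
Lipschitz continuous and satisfy `c₀(1+|p|²) ≤ H̲(p) ≤ H̄(p) ≤ C(1+|p|²)` for some
`C ≥ c₀ > 0`. -/
theorem Hamiltonian_properties
    (a q c : ℝ → ℝ)
    (ha_cont : Continuous a) (hq_cont : Continuous q) (hc_cont : Continuous c)
    (ha_bdd : ∃ M, ∀ x, |a x| ≤ M) (hq_bdd : ∃ M, ∀ x, |q x| ≤ M)
    (hc_bdd : ∃ M, ∀ x, |c x| ≤ M)
    (ha_pos : ∃ m > 0, ∀ x, m ≤ a x)
    (hmono : ∃ m > 0, ∃ R₀ : ℝ, ∀ x : ℝ, R₀ ≤ |x| → m ≤ 4 * c x * a x - q x ^ 2)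
    (Hlow Hup : ℝ → ℝ)
    (hHlow : ∀ p : ℝ, Filter.Tendsto
      (fun R => lamLower a (fun x => 2 * p * a x + q x)
        (fun x => a x * p ^ 2 + q x * p + c x) R) Filter.atTop (nhds (Hlow p)))
    (hHup : ∀ p : ℝ, Filter.Tendsto
      (fun R => lamUpper a (fun x => 2 * p * a x + q x)
        (fun x => a x * p ^ 2 + q x * p + c x) R) Filter.atTop (nhds (Hup p))) :
    LocallyLipschitz Hlow ∧ LocallyLipschitz Hup ∧
    ∃ C c₀ : ℝ, 0 < c₀ ∧ c₀ ≤ C ∧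
      ∀ p : ℝ, c₀ * (1 + |p| ^ 2) ≤ Hlow p ∧ Hlow p ≤ Hup p ∧
        Hup p ≤ C * (1 + |p| ^ 2) :=
  Hamiltonian_properties_general a q c ha_bdd hq_bdd hc_bdd ha_pos hmono Hlow Hup hHlow hHup
end

section
/- Assume the standing hypotheses on a, q, f, let u₀ be measurable and compactly supported with 0 ≤ u₀ ≤ 1, u₀ ≢ 0, and let u be a classical solution of ∂_t u = a(x)∂_xx u + q(x)∂_x u + f(x,u) with u(0,·) = u₀ and 0 ≤ u ≤ 1, and assume there exists c > 0 with lim_{t→+∞} inf_{|x| ≤ ct} u(t,x) = 1. Define Z_ε(t,x) := ε ln u(t/ε, x/ε). Then for every compact set Q ⊂ (0,∞)×ℝ there exist constants C = C(Q) > 0 and ε₀ = ε₀(Q) > 0 such that |Z_ε(t,x)| ≤ C for all 0 < ε < ε₀ and all (t,x) ∈ Q. -/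
/-!
Since `u ≤ 1`, only a lower bound `u(t, x) ≥ e^{-β|x|}/4` is needed, uniformly in the region
`|x| + 1 ≤ κ (t - T)`; rescaling by `ε` turns it into `Z_ε ≥ -β|x| - log 4` once `ε` is small.
As `f ≥ 0` on `[0, 1]`, `u` is a supersolution of the linear equation `∂ₜu = a ∂ₓₓu + q ∂ₓu`.
By the spreading hypothesis `u ≥ 1/2` on a cone `|x| ≤ c t`, `t ≥ T`; to the right of it `u` lies
above the barrier `(e^{β(ct - x)} - e^{βκ(T - t)})/2` on the trapezoid
`ct ≤ x ≤ ct + κ(t - T)`, by the weak minimum principle, because for `β` large the barrier is a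
strict subsolution (`inf a > 0` and `q` bounded). The left side follows by reflecting `x ↦ -x`.
-/

open Real Filter Set Topology

/-- Standing hypotheses on the coefficients `a`, `q` and the nonlinearity `f`
(`fs x s` denotes the partial derivative `f_s'(x,s)`). -/
def StandingHyp (a q : ℝ → ℝ) (f fs : ℝ → ℝ → ℝ) (γ : ℝ) : Prop :=
  (0 < γ ∧ γ < 1) ∧
  (UniformContinuous a ∧ ∃ M, ∀ x, |a x| ≤ M) ∧
  (UniformContinuous q ∧ ∃ M, ∀ x, |q x| ≤ M) ∧
  (∃ m > 0, ∀ x, m ≤ a x) ∧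
  (∀ ε > 0, ∃ δ > 0, ∀ x y : ℝ, |x - y| < δ → ∀ s ∈ Set.Icc (0:ℝ) 1, |f x s - f y s| < ε) ∧
  (∃ M, ∀ x : ℝ, ∀ s ∈ Set.Icc (0:ℝ) 1, |f x s| ≤ M) ∧
  (∀ x : ℝ, ∀ s ∈ Set.Icc (0:ℝ) 1, HasDerivAt (f x) (fs x s) s) ∧
  (∃ C, ∀ x : ℝ, ∀ s ∈ Set.Icc (0:ℝ) 1, ∀ t ∈ Set.Icc (0:ℝ) 1,
      |fs x s - fs x t| ≤ C * |s - t| ^ γ) ∧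
  (∀ x : ℝ, f x 0 = 0 ∧ f x 1 = 0) ∧
  (∀ s ∈ Set.Ioo (0:ℝ) 1, ∃ m > 0, ∀ x : ℝ, m ≤ f x s) ∧
  (∀ x : ℝ, ∀ s ∈ Set.Icc (0:ℝ) 1, f x s ≤ fs x 0 * s) ∧
  (∃ m > 0, ∃ R : ℝ, ∀ x : ℝ, R ≤ |x| → m ≤ 4 * fs x 0 * a x - q x ^ 2)

/-- A classical solution of `∂_t u = a ∂_xx u + q ∂_x u + f(x,u)` on `(0,∞) × ℝ`,
continuous on `[0,∞) × ℝ`, `C¹` in `t` and `C²` in `x` on `(0,∞) × ℝ`. -/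
def ClassicalSolution (a q : ℝ → ℝ) (f : ℝ → ℝ → ℝ) (u ut ux uxx : ℝ → ℝ → ℝ) : Prop :=
  ContinuousOn (fun pr : ℝ × ℝ => u pr.1 pr.2) (Set.Ici 0 ×ˢ Set.univ) ∧
  (∀ t > (0:ℝ), ∀ x : ℝ,
    HasDerivAt (fun τ => u τ x) (ut t x) t ∧
    HasDerivAt (fun y => u t y) (ux t x) x ∧
    HasDerivAt (fun y => ux t y) (uxx t x) x ∧
    ut t x = a x * uxx t x + q x * ux t x + f x (u t x)) ∧
  ContinuousOn (fun pr : ℝ × ℝ => ut pr.1 pr.2) (Set.Ioi 0 ×ˢ Set.univ) ∧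
  ContinuousOn (fun pr : ℝ × ℝ => ux pr.1 pr.2) (Set.Ioi 0 ×ˢ Set.univ) ∧
  ContinuousOn (fun pr : ℝ × ℝ => uxx pr.1 pr.2) (Set.Ioi 0 ×ˢ Set.univ)

lemma HasDerivAt.nonpos_of_eventually_nhdsLT_le {h : ℝ → ℝ} {h' t : ℝ} (hd : HasDerivAt h h' t)
    (hmin : ∀ᶠ s in 𝓝[<] t, h t ≤ h s) : h' ≤ 0 := by
  have hslope : Tendsto (slope h t) (𝓝[<] t) (𝓝 h') :=
    (hasDerivAt_iff_tendsto_slope.mp hd).mono_left (nhdsWithin_mono _ fun _ hs => ne_of_lt hs)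
  refine le_of_tendsto hslope ?_
  filter_upwards [hmin, self_mem_nhdsWithin] with s hle hlt
  rw [slope_def_field]
  exact div_nonpos_of_nonneg_of_nonpos (sub_nonneg.mpr hle) (sub_nonpos.mpr (le_of_lt hlt))

/-- If `g''(x) < 0`, the second derivative test makes `x` also a local maximum, so `g` is locally
constant and `g''(x) = 0`. -/
lemma IsLocalMin.nonneg_of_hasDerivAt_deriv {g g' : ℝ → ℝ} {g'' x : ℝ} (hmin : IsLocalMin g x)
    (hg : ∀ y, HasDerivAt g (g' y) y) (hg' : HasDerivAt g' g'' x) : 0 ≤ g'' := by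
  by_contra! hneg
  have hderiv : deriv g = g' := funext fun y => (hg y).deriv
  have hmax : IsLocalMax g x :=
    isLocalMax_of_deriv_deriv_neg (by rwa [hderiv, hg'.deriv])
      (by rw [hderiv]; exact hmin.hasDerivAt_eq_zero (hg x)) (hg x).continuousAt
  have hconst : g =ᶠ[𝓝 x] fun _ => g x := by
    filter_upwards [hmin, hmax] with y hy₁ hy₂
    exact le_antisymm hy₂ hy₁
  have hg'_zero : g' =ᶠ[𝓝 x] fun _ => 0 := by
    simpa [hderiv] using hconst.deriv
  exact hneg.ne (hg'.unique ((hasDerivAt_const x 0).congr_of_eventuallyEq hg'_zero))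

def betweenGraphs (ℓ r : ℝ → ℝ) (T t₁ : ℝ) : Set (ℝ × ℝ) :=
  {p | p.1 ∈ Icc T t₁ ∧ p.2 ∈ Icc (ℓ p.1) (r p.1)}

lemma isCompact_betweenGraphs {ℓ r : ℝ → ℝ} (hℓ : Continuous ℓ) (hr : Continuous r) (T t₁ : ℝ) :
    IsCompact (betweenGraphs ℓ r T t₁) := by
  obtain ⟨A, hA⟩ := (isCompact_Icc.image hℓ : IsCompact (ℓ '' Icc T t₁)).isBounded.bddBelow
  obtain ⟨B, hB⟩ := (isCompact_Icc.image hr : IsCompact (r '' Icc T t₁)).isBounded.bddAbove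
  have hclosed : IsClosed (betweenGraphs ℓ r T t₁) :=
    (isClosed_Icc.preimage continuous_fst).inter
      ((isClosed_le (hℓ.comp continuous_fst) continuous_snd).inter
        (isClosed_le continuous_snd (hr.comp continuous_fst)))
  refine (isCompact_Icc (a := T) (b := t₁) |>.prod (isCompact_Icc (a := A) (b := B)))
    |>.of_isClosed_subset hclosed ?_
  rintro ⟨t, x⟩ ⟨ht, hx⟩
  exact ⟨ht, (hA ⟨t, ht, rfl⟩).trans hx.1, hx.2.trans (hB ⟨t, ht, rfl⟩)⟩

/-- Weak minimum principle for a strict supersolution of `∂ₜv = a ∂ₓₓv + q ∂ₓv` with `a ≥ 0`: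
at a minimum off the parabolic boundary one would have `∂ₓv = 0`, `∂ₓₓv ≥ 0` and `∂ₜv ≤ 0`. -/
theorem nonneg_of_strict_supersolution {a q ℓ r : ℝ → ℝ} {v vt vx vxx : ℝ → ℝ → ℝ} {T t₁ : ℝ}
    (ha : ∀ x, 0 ≤ a x) (hℓ : Continuous ℓ) (hr : Continuous r)
    (hv : ContinuousOn (fun p : ℝ × ℝ => v p.1 p.2) (betweenGraphs ℓ r T t₁))
    (hderiv : ∀ t ∈ Ioc T t₁, ∀ x, HasDerivAt (fun τ => v τ x) (vt t x) t ∧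
      HasDerivAt (v t) (vx t x) x ∧ HasDerivAt (vx t) (vxx t x) x)
    (hstrict : ∀ t ∈ Ioc T t₁, ∀ x ∈ Ioo (ℓ t) (r t), a x * vxx t x + q x * vx t x < vt t x)
    (hinit : ∀ x ∈ Icc (ℓ T) (r T), 0 ≤ v T x)
    (hleft : ∀ t ∈ Icc T t₁, 0 ≤ v t (ℓ t)) (hright : ∀ t ∈ Icc T t₁, 0 ≤ v t (r t)) :
    ∀ p ∈ betweenGraphs ℓ r T t₁, 0 ≤ v p.1 p.2 := by
  intro p hp
  obtain ⟨⟨s, z⟩, ⟨hs, hz⟩, hmin⟩ :=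
    (isCompact_betweenGraphs hℓ hr T t₁).exists_isMinOn ⟨p, hp⟩ hv
  refine le_trans ?_ (hmin hp)
  dsimp only at hs hz ⊢
  rcases hs.1.eq_or_lt with rfl | hTs
  · exact hinit z hz
  rcases hz.1.eq_or_lt with rfl | hℓz
  · exact hleft s hs
  rcases hz.2.eq_or_lt with rfl | hzr
  · exact hright s hs
  exfalso
  have hs' : s ∈ Ioc T t₁ := ⟨hTs, hs.2⟩
  obtain ⟨hvt, hvx, hvxx⟩ := hderiv s hs' z
  have hloc : IsLocalMin (v s) z := by
    filter_upwards [Ioo_mem_nhds hℓz hzr] with y hy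
    exact hmin (show (s, y) ∈ betweenGraphs ℓ r T t₁ from ⟨hs, hy.1.le, hy.2.le⟩)
  have hvx_zero : vx s z = 0 := hloc.hasDerivAt_eq_zero hvx
  have hvxx_nonneg : 0 ≤ vxx s z :=
    hloc.nonneg_of_hasDerivAt_deriv (fun y => (hderiv s hs' y).2.1) hvxx
  have hvt_nonpos : vt s z ≤ 0 := by
    refine hvt.nonpos_of_eventually_nhdsLT_le ?_
    have hnear : ∀ᶠ τ in 𝓝 s, T < τ ∧ ℓ τ < z ∧ z < r τ :=
      (eventually_gt_nhds hTs).and <| ((hℓ.tendsto s).eventually (eventually_lt_nhds hℓz)).and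
        ((hr.tendsto s).eventually (eventually_gt_nhds hzr))
    filter_upwards [nhdsWithin_le_nhds hnear, self_mem_nhdsWithin] with τ ⟨hTτ, hℓτ, hrτ⟩ hτs
    exact hmin (show (τ, z) ∈ betweenGraphs ℓ r T t₁ from
      ⟨⟨hTτ.le, hτs.le.trans hs.2⟩, hℓτ.le, hrτ.le⟩)
  have := hstrict s hs' z ⟨hℓz, hzr⟩
  rw [hvx_zero, mul_zero, add_zero] at this
  linarith [mul_nonneg (ha z) hvxx_nonneg]

structure IsLinearSupersolution (a q : ℝ → ℝ) (u ut ux uxx : ℝ → ℝ → ℝ) (T : ℝ) : Prop where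
  continuousOn : ContinuousOn (fun p : ℝ × ℝ => u p.1 p.2) (Ici T ×ˢ univ)
  hasDerivAt_time : ∀ t > T, ∀ x, HasDerivAt (fun τ => u τ x) (ut t x) t
  hasDerivAt_space : ∀ t > T, ∀ x, HasDerivAt (u t) (ux t x) x
  hasDerivAt_space_space : ∀ t > T, ∀ x, HasDerivAt (ux t) (uxx t x) x
  le_time : ∀ t > T, ∀ x, a x * uxx t x + q x * ux t x ≤ ut t x

lemma StandingHyp.nonlinearity_nonneg {a q : ℝ → ℝ} {f fs : ℝ → ℝ → ℝ} {γ : ℝ}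
    (hst : StandingHyp a q f fs γ) (x : ℝ) : ∀ s ∈ Icc (0 : ℝ) 1, 0 ≤ f x s := by
  obtain ⟨-, -, -, -, -, -, -, -, hf01, hfpos, -⟩ := hst
  rintro s ⟨hs0, hs1⟩
  rcases hs0.eq_or_lt with rfl | hs0
  · exact (hf01 x).1.ge
  rcases hs1.eq_or_lt with rfl | hs1
  · exact (hf01 x).2.ge
  obtain ⟨m, hm, hmf⟩ := hfpos s ⟨hs0, hs1⟩
  exact hm.le.trans (hmf x)

lemma ClassicalSolution.isLinearSupersolution {a q : ℝ → ℝ} {f : ℝ → ℝ → ℝ}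
    {u ut ux uxx : ℝ → ℝ → ℝ} (hsol : ClassicalSolution a q f u ut ux uxx)
    (hf : ∀ x, ∀ s ∈ Icc (0 : ℝ) 1, 0 ≤ f x s) (hu : ∀ t > (0 : ℝ), ∀ x, u t x ∈ Icc (0 : ℝ) 1)
    {T : ℝ} (hT : 0 ≤ T) : IsLinearSupersolution a q u ut ux uxx T where
  continuousOn := hsol.1.mono (prod_mono (Ici_subset_Ici.mpr hT) subset_rfl)
  hasDerivAt_time t ht x := (hsol.2.1 t (hT.trans_lt ht) x).1
  hasDerivAt_space t ht x := (hsol.2.1 t (hT.trans_lt ht) x).2.1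
  hasDerivAt_space_space t ht x := (hsol.2.1 t (hT.trans_lt ht) x).2.2.1
  le_time t ht x := by
    have hpos := hT.trans_lt ht
    linarith [(hsol.2.1 t hpos x).2.2.2, hf x _ (hu t hpos x)]

lemma IsLinearSupersolution.reflect {a q : ℝ → ℝ} {u ut ux uxx : ℝ → ℝ → ℝ} {T : ℝ}
    (hu : IsLinearSupersolution a q u ut ux uxx T) :
    IsLinearSupersolution (fun x => a (-x)) (fun x => -q (-x)) (fun t x => u t (-x))
      (fun t x => ut t (-x)) (fun t x => -ux t (-x)) (fun t x => uxx t (-x)) T where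
  continuousOn := hu.continuousOn.comp (continuous_fst.prodMk continuous_snd.neg).continuousOn
    fun _ hp => ⟨hp.1, trivial⟩
  hasDerivAt_time t ht x := hu.hasDerivAt_time t ht (-x)
  hasDerivAt_space t ht x := by
    simpa [Function.comp_def] using (hu.hasDerivAt_space t ht (-x)).comp x (hasDerivAt_neg x)
  hasDerivAt_space_space t ht x := by
    simpa [Function.comp_def] using
      ((hu.hasDerivAt_space_space t ht (-x)).comp x (hasDerivAt_neg x)).fun_neg
  le_time t ht x := by
    linarith [hu.le_time t ht (-x)]

noncomputable def barrier (c κ β T t x : ℝ) : ℝ :=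
  (exp (β * (c * t - x)) - exp (β * κ * (T - t))) / 2

lemma hasDerivAt_barrier_time (c κ β T t x : ℝ) :
    HasDerivAt (fun τ => barrier c κ β T τ x)
      ((β * c * exp (β * (c * t - x)) + β * κ * exp (β * κ * (T - t))) / 2) t := by
  have h₁ : HasDerivAt (fun τ => β * (c * τ - x)) (β * c) t := by
    simpa using (((hasDerivAt_id t).const_mul c).sub_const x).const_mul β
  have h₂ : HasDerivAt (fun τ => β * κ * (T - τ)) (-(β * κ)) t := by
    simpa using ((hasDerivAt_id t).const_sub T).const_mul (β * κ)
  exact ((h₁.exp.sub h₂.exp).div_const 2).congr_deriv (by ring)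

lemma hasDerivAt_barrier_space (c κ β T t x : ℝ) :
    HasDerivAt (barrier c κ β T t) (-(β * exp (β * (c * t - x))) / 2) x := by
  have h : HasDerivAt (fun y => β * (c * t - y)) (-β) x := by
    simpa using ((hasDerivAt_id x).const_sub (c * t)).const_mul β
  exact ((h.exp.sub_const (exp (β * κ * (T - t)))).div_const 2).congr_deriv (by ring)

lemma hasDerivAt_barrier_space_space (c β t x : ℝ) :
    HasDerivAt (fun y => -(β * exp (β * (c * t - y))) / 2)
      (β ^ 2 * exp (β * (c * t - x)) / 2) x := by
  have h : HasDerivAt (fun y => β * (c * t - y)) (-β) x := by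
    simpa using ((hasDerivAt_id x).const_sub (c * t)).const_mul β
  exact ((h.exp.const_mul β).neg.div_const 2).congr_deriv (by ring)

/-- Behind the line `x = c t + κ (t - T)` the second exponential is dominated by the first, and
`β` large makes the diffusion term `a β²` beat the drift, speed and `κ` terms. -/
lemma barrier_time_lt {a q m Mq c κ β T t x : ℝ} (ha : m ≤ a) (hq : |q| ≤ Mq) (hκ : 0 ≤ κ)
    (hβ : 0 < β) (hβm : κ + c + Mq < m * β) (hx : x ≤ c * t + κ * (t - T)) :
    (β * c * exp (β * (c * t - x)) + β * κ * exp (β * κ * (T - t))) / 2 <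
      a * (β ^ 2 * exp (β * (c * t - x)) / 2) + q * (-(β * exp (β * (c * t - x))) / 2) := by
  have hdom : exp (β * κ * (T - t)) ≤ exp (β * (c * t - x)) :=
    exp_le_exp.mpr (by nlinarith)
  have hpos := exp_pos (β * (c * t - x))
  have hgap : 0 < (a * β - q - c) * exp (β * (c * t - x)) - κ * exp (β * κ * (T - t)) := by
    nlinarith [le_abs_self q, mul_le_mul_of_nonneg_left hdom hκ,
      mul_le_mul_of_nonneg_right ha hβ.le]
  nlinarith [mul_pos hβ hgap]

lemma quarter_exp_le_barrier {c κ β T t x : ℝ} (hβ : 1 ≤ β) (hx : x - c * t + 1 ≤ κ * (t - T)) :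
    exp (-(β * (x - c * t))) / 4 ≤ barrier c κ β T t x := by
  have hsmall : exp (β * κ * (T - t)) ≤ exp (β * (c * t - x)) / 2 := by
    rw [← exp_log (two_pos (α := ℝ)), ← exp_sub]
    refine exp_le_exp.mpr ?_
    nlinarith [log_two_lt_d9]
  rw [barrier, show -(β * (x - c * t)) = β * (c * t - x) by ring]
  linarith

namespace IsLinearSupersolution

variable {a q : ℝ → ℝ} {u ut ux uxx : ℝ → ℝ → ℝ} {T m Mq c κ β : ℝ}

theorem barrier_le (hu : IsLinearSupersolution a q u ut ux uxx T)
    (hu0 : ∀ t ≥ T, ∀ x, 0 ≤ u t x) (hedge : ∀ t ≥ T, 1 / 2 ≤ u t (c * t))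
    (hm : 0 ≤ m) (ha : ∀ x, m ≤ a x) (hq : ∀ x, |q x| ≤ Mq) (hκ : 0 ≤ κ) (hβ : 0 < β)
    (hβm : κ + c + Mq < m * β) :
    ∀ t ≥ T, ∀ x ∈ Icc (c * t) (c * t + κ * (t - T)), barrier c κ β T t x ≤ u t x := by
  have hleft : ∀ s ≥ T, 0 ≤ u s (c * s) - barrier c κ β T s (c * s) := by
    intro s hs
    have : barrier c κ β T s (c * s) ≤ 1 / 2 := by
      simp only [barrier, sub_self, mul_zero, exp_zero]
      linarith [exp_pos (β * κ * (T - s))]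
    linarith [hedge s hs]
  intro t ht x hx
  have hmin := nonneg_of_strict_supersolution (q := q) (t₁ := t) (ℓ := fun t => c * t)
    (r := fun t => c * t + κ * (t - T)) (v := fun t x => u t x - barrier c κ β T t x)
    (vt := fun t x => ut t x - (β * c * exp (β * (c * t - x)) + β * κ * exp (β * κ * (T - t))) / 2)
    (vx := fun t x => ux t x - -(β * exp (β * (c * t - x))) / 2)
    (vxx := fun t x => uxx t x - β ^ 2 * exp (β * (c * t - x)) / 2)
    (fun x => hm.trans (ha x)) (by fun_prop) (by fun_prop) ?cont ?deriv ?strict ?init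
    (fun s hs => hleft s hs.1) ?right (t, x) ⟨⟨ht, le_rfl⟩, hx⟩
  · exact sub_nonneg.mp hmin
  case cont =>
    refine (hu.continuousOn.mono fun p hp => ⟨hp.1.1, trivial⟩).sub ?_
    unfold barrier
    fun_prop
  case deriv =>
    intro s hs y
    exact ⟨(hu.hasDerivAt_time s hs.1 y).sub (hasDerivAt_barrier_time c κ β T s y),
      (hu.hasDerivAt_space s hs.1 y).sub (hasDerivAt_barrier_space c κ β T s y),
      (hu.hasDerivAt_space_space s hs.1 y).sub (hasDerivAt_barrier_space_space c β s y)⟩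
  case strict =>
    intro s hs y hy
    have := barrier_time_lt (ha y) (hq y) hκ hβ hβm hy.2.le
    linarith [hu.le_time s hs.1 y]
  case init =>
    intro y hy
    obtain rfl : y = c * T := by
      simp only [sub_self, mul_zero, add_zero] at hy
      exact le_antisymm hy.2 hy.1
    exact hleft T le_rfl
  case right =>
    intro s hs
    have : barrier c κ β T s (c * s + κ * (s - T)) = 0 := by
      rw [barrier, show β * (c * s - (c * s + κ * (s - T))) = β * κ * (T - s) by ring, sub_self,
        zero_div]
    simpa [this] using hu0 s hs.1 _

theorem quarter_exp_le_of_nonneg (hu : IsLinearSupersolution a q u ut ux uxx T)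
    (hu0 : ∀ t ≥ T, ∀ x, 0 ≤ u t x) (hT : 0 ≤ T) (hc : 0 ≤ c)
    (hcone : ∀ t ≥ T, ∀ x ∈ Icc 0 (c * t), 1 / 2 ≤ u t x)
    (hm : 0 ≤ m) (ha : ∀ x, m ≤ a x) (hq : ∀ x, |q x| ≤ Mq) (hκ : 0 ≤ κ) (hβ : 1 ≤ β)
    (hβm : κ + c + Mq < m * β) :
    ∀ t ≥ T, ∀ x ≥ 0, x + 1 ≤ κ * (t - T) → exp (-(β * x)) / 4 ≤ u t x := by
  intro t ht x hx hxκ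
  have hct : 0 ≤ c * t := mul_nonneg hc (hT.trans ht)
  rcases le_total x (c * t) with hin | hout
  · have : exp (-(β * x)) ≤ 1 := exp_le_one_iff.mpr (by nlinarith)
    linarith [hcone t ht x ⟨hx, hin⟩]
  · have hedge : ∀ s ≥ T, 1 / 2 ≤ u s (c * s) := fun s hs =>
      hcone s hs _ ⟨mul_nonneg hc (hT.trans hs), le_rfl⟩
    calc exp (-(β * x)) / 4 ≤ exp (-(β * (x - c * t))) / 4 := by gcongr; nlinarith
      _ ≤ barrier c κ β T t x := quarter_exp_le_barrier hβ (by linarith)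
      _ ≤ u t x := hu.barrier_le hu0 hedge hm ha hq hκ (by linarith) hβm t ht x
          ⟨hout, by linarith⟩

theorem quarter_exp_le (hu : IsLinearSupersolution a q u ut ux uxx T)
    (hu0 : ∀ t ≥ T, ∀ x, 0 ≤ u t x) (hT : 0 ≤ T) (hc : 0 ≤ c)
    (hcone : ∀ t ≥ T, ∀ x, |x| ≤ c * t → 1 / 2 ≤ u t x)
    (hm : 0 ≤ m) (ha : ∀ x, m ≤ a x) (hq : ∀ x, |q x| ≤ Mq) (hκ : 0 ≤ κ) (hβ : 1 ≤ β)
    (hβm : κ + c + Mq < m * β) :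
    ∀ t x, |x| + 1 ≤ κ * (t - T) → exp (-(β * |x|)) / 4 ≤ u t x := by
  intro t x hx
  have ht : T ≤ t := by
    by_contra! h
    nlinarith [abs_nonneg x]
  rcases le_total 0 x with hx0 | hx0
  · rw [abs_of_nonneg hx0] at hx ⊢
    refine hu.quarter_exp_le_of_nonneg hu0 hT hc (fun s hs y hy => hcone s hs y ?_) hm ha hq hκ hβ
      hβm t ht x hx0 hx
    rw [abs_of_nonneg hy.1]
    exact hy.2
  · rw [abs_of_nonpos hx0] at hx ⊢
    refine hu.reflect.quarter_exp_le_of_nonneg (fun s hs y => hu0 s hs (-y)) hT hc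
      (fun s hs y hy => hcone s hs (-y) ?_) hm (fun y => ha (-y)) (fun y => by simpa using hq (-y))
      hκ hβ hβm t ht (-x) (neg_nonneg.mpr hx0) hx |>.trans_eq (by simp)
    rw [abs_neg, abs_of_nonneg hy.1]
    exact hy.2

end IsLinearSupersolution

lemma abs_mul_log_le_of_exp_div_four_le {ε y B : ℝ} (hε : 0 < ε) (hε1 : ε ≤ 1)
    (hy : exp (-(B / ε)) / 4 ≤ y) (hy1 : y ≤ 1) : |ε * log y| ≤ B + log 4 := by
  have hy0 : 0 < y := (by positivity : 0 < exp (-(B / ε)) / 4).trans_le hy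
  have hlog : -(B / ε) - log 4 ≤ log y := by
    rw [← log_exp (-(B / ε)), ← log_div (exp_pos _).ne' four_ne_zero]
    exact log_le_log (by positivity) hy
  have hlog4 : 0 ≤ log 4 := log_nonneg (by norm_num)
  rw [abs_of_nonpos (mul_nonpos_of_nonneg_of_nonpos hε.le (log_nonpos hy0.le hy1))]
  have : -(B + ε * log 4) ≤ ε * log y := by
    have := mul_le_mul_of_nonneg_left hlog hε.le
    rw [mul_sub, mul_neg, mul_div_cancel₀ _ hε.ne'] at this
    linarith
  nlinarith

lemma IsCompact.exists_le_fst_and_abs_snd_le {Q : Set (ℝ × ℝ)} (hQ : IsCompact Q)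
    (hQpos : Q ⊆ Ioi 0 ×ˢ univ) : ∃ t₀ > 0, ∃ M ≥ 0, ∀ p ∈ Q, t₀ ≤ p.1 ∧ |p.2| ≤ M := by
  obtain ⟨M, hM, hQM⟩ := hQ.isBounded.exists_pos_norm_le
  have habs : ∀ p ∈ Q, |p.2| ≤ M := fun p hp => (norm_snd_le p).trans (hQM p hp)
  rcases Q.eq_empty_or_nonempty with rfl | hne
  · exact ⟨1, one_pos, M, hM.le, fun p hp => hp.elim⟩
  obtain ⟨p₀, hp₀, hmin⟩ := hQ.exists_isMinOn hne continuous_fst.continuousOn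
  exact ⟨p₀.1, (hQpos hp₀).1, M, hM.le, fun p hp => ⟨hmin hp, habs p hp⟩⟩

lemma abs_mul_log_le_of_exp_lower_bound {u : ℝ → ℝ → ℝ} {T κ β t₀ M ε t x : ℝ}
    (hu1 : ∀ t ≥ 0, ∀ x, u t x ≤ 1)
    (hlow : ∀ t x, |x| + 1 ≤ κ * (t - T) → exp (-(β * |x|)) / 4 ≤ u t x)
    (hβ : 0 ≤ β) (hκ : 0 ≤ κ) (hκt₀ : 2 * (M + 1) ≤ κ * t₀) (ht₀ : 0 < t₀)
    (hε : 0 < ε) (hε1 : ε ≤ 1) (hεT : ε * T ≤ t₀ / 2) (ht : t₀ ≤ t) (hx : |x| ≤ M) :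
    |ε * log (u (t / ε) (x / ε))| ≤ β * M + log 4 := by
  have hκ' : |x| + ε ≤ κ * (t - ε * T) :=
    calc |x| + ε ≤ κ * (t₀ - t₀ / 2) := by linarith
      _ ≤ κ * (t - ε * T) := by gcongr
  have hrange : |x / ε| + 1 ≤ κ * (t / ε - T) :=
    calc |x / ε| + 1 = (|x| + ε) / ε := by rw [abs_div, abs_of_pos hε]; field_simp
      _ ≤ κ * (t - ε * T) / ε := by gcongr
      _ = κ * (t / ε - T) := by field_simp
  calc |ε * log (u (t / ε) (x / ε))| ≤ β * |x| + log 4 := by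
        refine abs_mul_log_le_of_exp_div_four_le hε hε1 ?_
          (hu1 _ (div_pos (ht₀.trans_le ht) hε).le _)
        simpa [abs_div, abs_of_pos hε, mul_div_assoc] using hlow _ _ hrange
    _ ≤ β * M + log 4 := by gcongr

theorem Zeps_locally_bounded_general
    (a q : ℝ → ℝ) (f fs : ℝ → ℝ → ℝ) (γ : ℝ)
    (hst : StandingHyp a q f fs γ)
    (u ut ux uxx : ℝ → ℝ → ℝ)
    (hsol : ClassicalSolution a q f u ut ux uxx)
    (hu01 : ∀ t ≥ (0:ℝ), ∀ x : ℝ, u t x ∈ Set.Icc (0:ℝ) 1)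
    (hspread : ∃ c > 0, ∀ ε > 0, ∃ T : ℝ, ∀ t ≥ T, ∀ x : ℝ, |x| ≤ c * t → |u t x - 1| ≤ ε) :
    ∀ Q : Set (ℝ × ℝ), IsCompact Q → Q ⊆ Set.Ioi 0 ×ˢ Set.univ →
      ∃ C > 0, ∃ ε₀ > 0, ∀ ε : ℝ, 0 < ε → ε < ε₀ → ∀ p ∈ Q,
        |ε * Real.log (u (p.1 / ε) (p.2 / ε))| ≤ C := by
  intro Q hQ hQpos
  have hf := hst.nonlinearity_nonneg
  obtain ⟨-, -, ⟨-, Mq, hq⟩, ⟨m, hm, ha⟩, -⟩ := hst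
  obtain ⟨c, hc, hspread⟩ := hspread
  obtain ⟨T₀, hT₀⟩ := hspread (1 / 2) one_half_pos
  have hT : 0 ≤ max T₀ 0 := le_max_right T₀ 0
  have hcone : ∀ t ≥ max T₀ 0, ∀ x, |x| ≤ c * t → 1 / 2 ≤ u t x := fun t ht x hx => by
    linarith [(abs_le.mp (hT₀ t (le_of_max_le_left ht) x hx)).1]
  obtain ⟨t₀, ht₀, M, hM, hQM⟩ := hQ.exists_le_fst_and_abs_snd_le hQpos
  set κ := 2 * (M + 1) / t₀
  obtain ⟨β, hβ, hβm⟩ : ∃ β ≥ 1, κ + c + Mq < m * β :=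
    ⟨max 1 ((κ + c + Mq + 1) / m), le_max_left _ _, (div_lt_iff₀' hm).mp <|
      (div_lt_div_of_pos_right (lt_add_one _) hm).trans_le (le_max_right _ _)⟩
  have hlow := (hsol.isLinearSupersolution hf (fun t ht => hu01 t ht.le) hT).quarter_exp_le
    (fun t ht => (hu01 t (hT.trans ht) · |>.1)) hT hc.le hcone hm.le ha hq (by positivity) hβ hβm
  refine ⟨β * M + log 4, by positivity, min 1 (t₀ / (2 * (max T₀ 0 + 1))), by positivity,
    fun ε hε hεlt p hp => ?_⟩
  have hεT : ε * max T₀ 0 ≤ t₀ / 2 := by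
    linarith [(lt_div_iff₀ (by positivity)).mp (hεlt.trans_le (min_le_right _ _))]
  exact abs_mul_log_le_of_exp_lower_bound (fun t ht x => (hu01 t ht x).2) hlow (by positivity)
    (by positivity) (div_mul_cancel₀ _ ht₀.ne').ge ht₀ hε (hεlt.le.trans (min_le_left _ _)) hεT
    (hQM p hp).1 (hQM p hp).2

/-- Lemma 4.1 ii. Local uniform boundedness of
`Z_ε(t,x) = ε log u(t/ε, x/ε)` on compact subsets of `(0,∞) × ℝ`. -/
theorem Zeps_locally_bounded
    (a q : ℝ → ℝ) (f fs : ℝ → ℝ → ℝ) (γ : ℝ)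
    (hst : StandingHyp a q f fs γ)
    (u₀ : ℝ → ℝ) (hu₀_meas : Measurable u₀) (hu₀_supp : HasCompactSupport u₀)
    (hu₀_01 : ∀ x, u₀ x ∈ Set.Icc (0:ℝ) 1) (hu₀_ne : ∃ x, u₀ x ≠ 0)
    (u ut ux uxx : ℝ → ℝ → ℝ)
    (hsol : ClassicalSolution a q f u ut ux uxx)
    (hinit : ∀ x, u 0 x = u₀ x)
    (hu01 : ∀ t ≥ (0:ℝ), ∀ x : ℝ, u t x ∈ Set.Icc (0:ℝ) 1)
    (hspread : ∃ c > 0, ∀ ε > 0, ∃ T : ℝ, ∀ t ≥ T, ∀ x : ℝ, |x| ≤ c * t → |u t x - 1| ≤ ε) :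
    ∀ Q : Set (ℝ × ℝ), IsCompact Q → Q ⊆ Set.Ioi 0 ×ˢ Set.univ →
      ∃ C > 0, ∃ ε₀ > 0, ∀ ε : ℝ, 0 < ε → ε < ε₀ → ∀ p ∈ Q,
        |ε * Real.log (u (p.1 / ε) (p.2 / ε))| ≤ C :=
  Zeps_locally_bounded_general a q f fs γ hst u ut ux uxx hsol hu01 hspread
end
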